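/- Let v, g, t, h, u be non-negative integers with v = g·t·u. Suppose there exist: (1) a 4-frame of type g^u; (2) a (K₂, K_{1,3})-URD(h; r₁, s₁); (3) for each pair (r₂, s₂) in a set J₂, a (K₂, K_{1,3})-URGDD(r₂, s₂) of type t⁴; and (4) for each (r₃, s₃) in J₃ = (g/3)∗J₂ (the set of all sums of g/3 elements of J₂, with repetition allowed), a (K₂, K_{1,3})-IURD(g·t + h, h; [r₁, s₁], [r₃, s₃]). Then for every choice of pairs (r₃ʲ, s₃ʲ) ∈ J₃ for j = 1, …, u, there exists a (K₂, K_{1,3})-URD(v + h; r₁ + Σⱼ r₃ʲ, s₁ + Σⱼ s₃ʲ). -/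
import Mathlib


open Finset

/-- The vertex set of a 3-star `K_{1,3}` given by its center and its leaf set. -/
def starVerts {V : Type} [DecidableEq V] (b : V × Finset V) : Finset V :=
  insert b.1 b.2

/-- The edge set of a 3-star `K_{1,3}` given by its center and its leaf set. -/
def starEdges {V : Type} [DecidableEq V] (b : V × Finset V) : Finset (Sym2 V) :=
  b.2.image (fun l => s(b.1, l))

/-- The edge set of a complete block (e.g. a copy of `K₄`) on the vertex set `b`. -/
def blockEdges {V : Type} [DecidableEq V] (b : Finset V) : Finset (Sym2 V) :=
  ((b ×ˢ b).filter (fun p => p.1 ≠ p.2)).image (fun p => s(p.1, p.2))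

/-- `M` is a parallel class of copies of `K₂` (a perfect matching) on the point set `P`:
all edges come from `E`, lie inside `P`, and every point of `P` is on exactly one edge. -/
def IsMatchingClass {V : Type} [DecidableEq V] (E : Finset (Sym2 V)) (P : Finset V)
    (M : Finset (Sym2 V)) : Prop :=
  (∀ e ∈ M, e ∈ E) ∧ (∀ e ∈ M, ∀ x ∈ e, x ∈ P) ∧
  (∀ x ∈ P, ∃! e, e ∈ M ∧ x ∈ e)

/-- `C` is a parallel class of copies of `K_{1,3}` on the point set `P`: every block is a
3-star with edges from `E` and vertices in `P`, and every point of `P` is in exactly one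
block (so the blocks are pairwise vertex-disjoint and their vertex sets partition `P`). -/
def IsStarClass {V : Type} [DecidableEq V] (E : Finset (Sym2 V)) (P : Finset V)
    (C : Finset (V × Finset V)) : Prop :=
  (∀ b ∈ C, b.2.card = 3 ∧ b.1 ∉ b.2 ∧ starEdges b ⊆ E ∧ starVerts b ⊆ P) ∧
  (∀ x ∈ P, ∃! b, b ∈ C ∧ x ∈ starVerts b)

/-- `C` is a parallel class of copies of `K₄` on the point set `P`. -/
def IsK4Class {V : Type} [DecidableEq V] (E : Finset (Sym2 V)) (P : Finset V)
    (C : Finset (Finset V)) : Prop :=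
  (∀ b ∈ C, b.card = 4 ∧ blockEdges b ⊆ E ∧ b ⊆ P) ∧
  (∀ x ∈ P, ∃! b, b ∈ C ∧ x ∈ b)

/-- A uniformly resolvable `(K₂, K_{1,3})`-decomposition of the edge set `E` into
`r₁` matching classes and `s₁` star classes on the point set `P` (partial classes), and
`r₂` matching classes and `s₂` star classes on the full vertex set (full classes), such
that every edge of `E` lies in exactly one block of exactly one class. -/
def HasHoleyDecomp {V : Type} [Fintype V] [DecidableEq V] (E : Finset (Sym2 V))
    (P : Finset V) (r₁ s₁ r₂ s₂ : ℕ) : Prop :=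
  ∃ (M₁ : Fin r₁ → Finset (Sym2 V)) (S₁ : Fin s₁ → Finset (V × Finset V))
    (M₂ : Fin r₂ → Finset (Sym2 V)) (S₂ : Fin s₂ → Finset (V × Finset V)),
    (∀ i, IsMatchingClass E P (M₁ i)) ∧ (∀ j, IsStarClass E P (S₁ j)) ∧
    (∀ i, IsMatchingClass E Finset.univ (M₂ i)) ∧
    (∀ j, IsStarClass E Finset.univ (S₂ j)) ∧
    (∀ e ∈ E,
      ((∑ i, if e ∈ M₁ i then 1 else 0) + (∑ i, if e ∈ M₂ i then 1 else 0)
        + (∑ j, ((S₁ j).filter (fun b => e ∈ starEdges b)).card)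
        + (∑ j, ((S₂ j).filter (fun b => e ∈ starEdges b)).card)) = 1)

/-- A uniformly resolvable `(K₂, K_{1,3})`-decomposition of the edge set `E` into `r`
parallel classes of copies of `K₂` and `s` parallel classes of copies of `K_{1,3}`,
each class partitioning the whole vertex set. -/
def HasUniformDecomp {V : Type} [Fintype V] [DecidableEq V] (E : Finset (Sym2 V))
    (r s : ℕ) : Prop :=
  HasHoleyDecomp E Finset.univ 0 0 r s

/-- The edge set of the complete graph on the vertex type `V`. -/
def completeEdges (V : Type) [Fintype V] [DecidableEq V] : Finset (Sym2 V) :=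
  (Finset.univ.filter (fun p : V × V => p.1 ≠ p.2)).image (fun p => s(p.1, p.2))

/-- The edge set of the complete multipartite graph with `u` groups of size `g`
(all edges between distinct groups, none within a group). -/
def multipartiteEdges (u g : ℕ) : Finset (Sym2 (Fin u × Fin g)) :=
  (Finset.univ.filter
      (fun p : (Fin u × Fin g) × (Fin u × Fin g) => p.1.1 ≠ p.2.1)).image
    (fun p => s(p.1, p.2))

/-- The edge set of `K_{v+h}` minus the edges of a `K_h` on a hole of size `h`
(the hole consists of the `Sum.inr` vertices). -/
def holeyEdges (v h : ℕ) : Finset (Sym2 (Fin v ⊕ Fin h)) :=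
  (Finset.univ.filter (fun p : (Fin v ⊕ Fin h) × (Fin v ⊕ Fin h) =>
      p.1 ≠ p.2 ∧ ¬(p.1.isRight ∧ p.2.isRight))).image (fun p => s(p.1, p.2))

/-- A `(K₂, K_{1,3})`-URD(v; r, s): a decomposition of the edge set of `K_v` into `r`
parallel classes of copies of `K₂` and `s` parallel classes of copies of `K_{1,3}`. -/
def IsURD (v r s : ℕ) : Prop :=
  HasUniformDecomp (completeEdges (Fin v)) r s

/-- A `(K₂, K_{1,3})`-URGDD(r, s) of type `g^u`: a uniformly resolvable decomposition of
the complete multipartite graph with `u` groups of size `g` into `r` parallel classes of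
copies of `K₂` and `s` parallel classes of copies of `K_{1,3}`. -/
def IsURGDD (g u r s : ℕ) : Prop :=
  HasUniformDecomp (multipartiteEdges u g) r s

/-- A `(K₂, K_{1,3})`-IURD(v + h, h; [r₁, s₁], [r₂, s₂]): a decomposition of `K_{v+h}`
minus a hole of size `h` into `r₁` matching classes and `s₁` star classes covering
exactly the `v` points outside the hole (partial classes), and `r₂` matching classes and
`s₂` star classes covering all `v + h` points (full classes). -/
def IsIURD (v h r₁ s₁ r₂ s₂ : ℕ) : Prop :=
  HasHoleyDecomp (holeyEdges v h)
    (Finset.univ.filter (fun x : Fin v ⊕ Fin h => x.isLeft)) r₁ s₁ r₂ s₂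

/-- A `4`-RGDD of type `g^u` with `h` parallel classes: a resolvable decomposition of the
complete multipartite graph with `u` groups of size `g` into copies of `K₄`, partitioned
into `h` parallel classes each of which partitions the whole vertex set. -/
def Is4RGDD (g u h : ℕ) : Prop :=
  ∃ C : Fin h → Finset (Finset (Fin u × Fin g)),
    (∀ i, IsK4Class (multipartiteEdges u g) Finset.univ (C i)) ∧
    (∀ e ∈ multipartiteEdges u g,
      (∑ i, ((C i).filter (fun b => e ∈ blockEdges b)).card) = 1)

/-- A `4`-frame of type `g^u`: a decomposition of the complete multipartite graph with
`u` groups of size `g` into copies of `K₄`, partitioned into partial parallel classes,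
`g / 3` of them missing each group, each partitioning the points outside that group. -/
def Is4Frame (g u : ℕ) : Prop :=
  ∃ C : Fin u → Fin (g / 3) → Finset (Finset (Fin u × Fin g)),
    (∀ i j, IsK4Class (multipartiteEdges u g)
        (Finset.univ.filter (fun x : Fin u × Fin g => x.1 ≠ i)) (C i j)) ∧
    (∀ e ∈ multipartiteEdges u g,
      (∑ i, ∑ j, ((C i j).filter (fun b => e ∈ blockEdges b)).card) = 1)

/-- `sumsOf k X` is the set `k ∗ X` of all pairs obtained by adding `k` elements of `X`
together (repetitions allowed). -/
def sumsOf (k : ℕ) (X : Set (ℕ × ℕ)) : Set (ℕ × ℕ) :=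
  {p | ∃ f : Fin k → ℕ × ℕ, (∀ i, f i ∈ X) ∧
    p = (∑ i, (f i).1, ∑ i, (f i).2)}

section Helpers

open Function

variable {V : Type} [DecidableEq V] {W : Type} [DecidableEq W]

lemma mk_mem_completeEdges [Fintype V] {a b : V} :
    s(a, b) ∈ completeEdges V ↔ a ≠ b := by
  constructor
  · intro h
    obtain ⟨p, hp, hpe⟩ := Finset.mem_image.1 h
    rw [Finset.mem_filter] at hp
    rcases Sym2.eq_iff.1 hpe with ⟨rfl, rfl⟩ | ⟨rfl, rfl⟩
    · exact hp.2
    · exact (Ne.symm hp.2)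
  · intro h
    exact Finset.mem_image.2 ⟨(a, b), Finset.mem_filter.2 ⟨Finset.mem_univ _, h⟩, rfl⟩

lemma mk_mem_multipartiteEdges {u g : ℕ} {a b : Fin u × Fin g} :
    s(a, b) ∈ multipartiteEdges u g ↔ a.1 ≠ b.1 := by
  constructor
  · intro h
    obtain ⟨p, hp, hpe⟩ := Finset.mem_image.1 h
    rw [Finset.mem_filter] at hp
    rcases Sym2.eq_iff.1 hpe with ⟨rfl, rfl⟩ | ⟨rfl, rfl⟩
    · exact hp.2
    · exact (Ne.symm hp.2)
  · intro h
    exact Finset.mem_image.2 ⟨(a, b), Finset.mem_filter.2 ⟨Finset.mem_univ _, h⟩, rfl⟩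

lemma mk_mem_holeyEdges {v h : ℕ} {a b : Fin v ⊕ Fin h} :
    s(a, b) ∈ holeyEdges v h ↔ a ≠ b ∧ ¬(a.isRight ∧ b.isRight) := by
  constructor
  · intro hm
    obtain ⟨p, hp, hpe⟩ := Finset.mem_image.1 hm
    rw [Finset.mem_filter] at hp
    rcases Sym2.eq_iff.1 hpe with ⟨rfl, rfl⟩ | ⟨rfl, rfl⟩
    · exact hp.2
    · exact ⟨(hp.2.1).symm, fun hh => hp.2.2 ⟨hh.2, hh.1⟩⟩
  · intro hm
    exact Finset.mem_image.2 ⟨(a, b), Finset.mem_filter.2 ⟨Finset.mem_univ _, hm⟩, rfl⟩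

lemma mk_mem_blockEdges {c : Finset V} {a b : V} :
    s(a, b) ∈ blockEdges c ↔ a ∈ c ∧ b ∈ c ∧ a ≠ b := by
  constructor
  · intro hm
    obtain ⟨p, hp, hpe⟩ := Finset.mem_image.1 hm
    rw [Finset.mem_filter, Finset.mem_product] at hp
    rcases Sym2.eq_iff.1 hpe with ⟨rfl, rfl⟩ | ⟨rfl, rfl⟩
    · exact ⟨hp.1.1, hp.1.2, hp.2⟩
    · exact ⟨hp.1.2, hp.1.1, (Ne.symm hp.2)⟩
  · intro hm
    exact Finset.mem_image.2 ⟨(a, b),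
      Finset.mem_filter.2 ⟨Finset.mem_product.2 ⟨hm.1, hm.2.1⟩, hm.2.2⟩, rfl⟩

lemma mem_starEdges_iff {b : V × Finset V} {e : Sym2 V} :
    e ∈ starEdges b ↔ ∃ l ∈ b.2, e = s(b.1, l) := by
  simp [starEdges, eq_comm]

/-- Mapping a star block along a function. -/
def mapStar (φ : W → V) (b : W × Finset W) : V × Finset V :=
  (φ b.1, b.2.image φ)

lemma starEdges_mapStar (φ : W → V) (b : W × Finset W) :
    starEdges (mapStar φ b) = (starEdges b).image (Sym2.map φ) := by
  simp only [starEdges, mapStar, Finset.image_image]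
  apply Finset.image_congr
  intro l _
  simp [Sym2.map_pair_eq]

lemma starVerts_mapStar (φ : W → V) (b : W × Finset W) :
    starVerts (mapStar φ b) = (starVerts b).image φ := by
  simp [starVerts, mapStar, Finset.image_insert]

lemma mapStar_injective {φ : W → V} (hφ : Injective φ) : Injective (mapStar φ) := by
  intro b₁ b₂ hb
  simp only [mapStar, Prod.mk.injEq] at hb
  exact Prod.ext (hφ hb.1) (Finset.image_injective hφ hb.2)

end Helpers
set_option linter.unusedSectionVars false

section Helpers2

open Function

variable {V : Type} [DecidableEq V] {W : Type} [DecidableEq W]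

lemma IsMatchingClass.map {E : Finset (Sym2 W)} {P : Finset W} {M : Finset (Sym2 W)}
    {E' : Finset (Sym2 V)} (φ : W → V) (hφ : Injective φ)
    (hE : ∀ e ∈ E, Sym2.map φ e ∈ E')
    (h : IsMatchingClass E P M) :
    IsMatchingClass E' (P.image φ) (M.image (Sym2.map φ)) := by
  obtain ⟨hE0, hP0, hU0⟩ := h
  refine ⟨?_, ?_, ?_⟩
  · intro e he
    obtain ⟨ee, hee, rfl⟩ := Finset.mem_image.1 he
    exact hE _ (hE0 _ hee)
  · intro e he x hx
    obtain ⟨ee, hee, rfl⟩ := Finset.mem_image.1 he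
    obtain ⟨w, hw, rfl⟩ := Sym2.mem_map.1 hx
    exact Finset.mem_image_of_mem φ (hP0 _ hee _ hw)
  · intro x hx
    obtain ⟨w, hw, rfl⟩ := Finset.mem_image.1 hx
    obtain ⟨e, ⟨heM, hwe⟩, huniq⟩ := hU0 w hw
    refine ⟨Sym2.map φ e, ⟨Finset.mem_image_of_mem _ heM, Sym2.mem_map.2 ⟨w, hwe, rfl⟩⟩, ?_⟩
    rintro e' ⟨he', hwe'⟩
    obtain ⟨ee, hee, rfl⟩ := Finset.mem_image.1 he'
    obtain ⟨w₂, hw₂, hww⟩ := Sym2.mem_map.1 hwe'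
    obtain rfl : w₂ = w := hφ hww
    rw [huniq ee ⟨hee, hw₂⟩]

lemma IsStarClass.map {E : Finset (Sym2 W)} {P : Finset W} {C : Finset (W × Finset W)}
    {E' : Finset (Sym2 V)} (φ : W → V) (hφ : Injective φ)
    (hE : ∀ e ∈ E, Sym2.map φ e ∈ E')
    (h : IsStarClass E P C) :
    IsStarClass E' (P.image φ) (C.image (mapStar φ)) := by
  obtain ⟨hB0, hU0⟩ := h
  constructor
  · intro b hb
    obtain ⟨b', hb', rfl⟩ := Finset.mem_image.1 hb
    obtain ⟨hc, hn, hse, hsv⟩ := hB0 b' hb'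
    refine ⟨?_, ?_, ?_, ?_⟩
    · simpa [mapStar] using (Finset.card_image_of_injective _ hφ).trans hc
    · intro hmem
      obtain ⟨l, hl, hll⟩ := Finset.mem_image.1 hmem
      exact hn ((hφ hll) ▸ hl)
    · rw [starEdges_mapStar]
      intro e he
      obtain ⟨ee, hee, rfl⟩ := Finset.mem_image.1 he
      exact hE _ (hse hee)
    · rw [starVerts_mapStar]
      intro x hx
      obtain ⟨w, hw, rfl⟩ := Finset.mem_image.1 hx
      exact Finset.mem_image_of_mem φ (hsv hw)
  · intro x hx
    obtain ⟨w, hw, rfl⟩ := Finset.mem_image.1 hx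
    obtain ⟨b, ⟨hbC, hwb⟩, huniq⟩ := hU0 w hw
    refine ⟨mapStar φ b, ⟨Finset.mem_image_of_mem _ hbC, ?_⟩, ?_⟩
    · rw [starVerts_mapStar]; exact Finset.mem_image_of_mem φ hwb
    · rintro b' ⟨hb', hwb'⟩
      obtain ⟨b₂, hb₂, rfl⟩ := Finset.mem_image.1 hb'
      rw [starVerts_mapStar] at hwb'
      obtain ⟨w₂, hw₂, hww⟩ := Finset.mem_image.1 hwb'
      obtain rfl : w₂ = w := hφ hww
      rw [huniq b₂ ⟨hb₂, hw₂⟩]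

lemma glue_matchingClass {ι : Type} [Fintype ι] [DecidableEq ι]
    {E : Finset (Sym2 V)} {Q : Finset V} {P : ι → Finset V} {M : ι → Finset (Sym2 V)}
    (hcls : ∀ c, IsMatchingClass E (P c) (M c))
    (hsub : ∀ c, P c ⊆ Q)
    (hcov : ∀ x ∈ Q, ∃! c, x ∈ P c) :
    IsMatchingClass E Q (Finset.univ.biUnion M) := by
  refine ⟨?_, ?_, ?_⟩
  · intro e he
    obtain ⟨c, _, hc⟩ := Finset.mem_biUnion.1 he
    exact (hcls c).1 _ hc
  · intro e he x hx
    obtain ⟨c, _, hc⟩ := Finset.mem_biUnion.1 he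
    exact hsub c ((hcls c).2.1 _ hc _ hx)
  · intro x hx
    obtain ⟨c, hc, hcuniq⟩ := hcov x hx
    obtain ⟨e, ⟨heM, hxe⟩, huniq⟩ := (hcls c).2.2 x hc
    refine ⟨e, ⟨Finset.mem_biUnion.2 ⟨c, Finset.mem_univ _, heM⟩, hxe⟩, ?_⟩
    rintro e' ⟨he', hxe'⟩
    obtain ⟨c', _, hc'⟩ := Finset.mem_biUnion.1 he'
    have : c' = c := hcuniq c' ((hcls c').2.1 _ hc' _ hxe')
    subst this
    exact huniq e' ⟨hc', hxe'⟩

lemma glue_starClass {ι : Type} [Fintype ι] [DecidableEq ι]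
    {E : Finset (Sym2 V)} {Q : Finset V} {P : ι → Finset V} {C : ι → Finset (V × Finset V)}
    (hcls : ∀ c, IsStarClass E (P c) (C c))
    (hsub : ∀ c, P c ⊆ Q)
    (hcov : ∀ x ∈ Q, ∃! c, x ∈ P c) :
    IsStarClass E Q (Finset.univ.biUnion C) := by
  constructor
  · intro b hb
    obtain ⟨c, _, hc⟩ := Finset.mem_biUnion.1 hb
    obtain ⟨h1, h2, h3, h4⟩ := (hcls c).1 b hc
    exact ⟨h1, h2, h3, h4.trans (hsub c)⟩
  · intro x hx
    obtain ⟨c, hc, hcuniq⟩ := hcov x hx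
    obtain ⟨b, ⟨hbC, hxb⟩, huniq⟩ := (hcls c).2 x hc
    refine ⟨b, ⟨Finset.mem_biUnion.2 ⟨c, Finset.mem_univ _, hbC⟩, hxb⟩, ?_⟩
    rintro b' ⟨hb', hxb'⟩
    obtain ⟨c', _, hc'⟩ := Finset.mem_biUnion.1 hb'
    have : c' = c := hcuniq c' (((hcls c').1 b' hc').2.2.2 hxb')
    subst this
    exact huniq b' ⟨hc', hxb'⟩

end Helpers2
section Helpers3

open Function

variable {V : Type} [DecidableEq V] {W : Type} [DecidableEq W]

lemma map_mem_image_iff {φ : W → V} (hφ : Injective φ) {M : Finset (Sym2 W)}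
    {e : Sym2 W} : Sym2.map φ e ∈ M.image (Sym2.map φ) ↔ e ∈ M := by
  constructor
  · intro h
    obtain ⟨e', he', hee⟩ := Finset.mem_image.1 h
    rwa [Sym2.map.injective hφ hee] at he'
  · exact Finset.mem_image_of_mem _

lemma card_filter_image_star {φ : W → V} (hφ : Injective φ)
    {S : Finset (W × Finset W)} {e : Sym2 W} :
    ((S.image (mapStar φ)).filter (fun b => Sym2.map φ e ∈ starEdges b)).card
      = (S.filter (fun b => e ∈ starEdges b)).card := by
  rw [Finset.filter_image]
  rw [Finset.card_image_of_injective _ (mapStar_injective hφ)]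
  congr 1
  apply Finset.filter_congr
  intro b _
  rw [starEdges_mapStar]
  exact map_mem_image_iff hφ

lemma match_image_zero {φ : W → V} {M : Finset (Sym2 W)} {e : Sym2 V}
    (h : ∀ p q : W, s(p, q) ∈ M → s(φ p, φ q) ≠ e) : e ∉ M.image (Sym2.map φ) := by
  intro hmem
  obtain ⟨e', he', hee⟩ := Finset.mem_image.1 hmem
  induction e' using Sym2.ind with
  | _ p q => exact h p q he' (by rw [← hee, Sym2.map_pair_eq])

lemma star_filter_zero {φ : W → V} {S : Finset (W × Finset W)} {e : Sym2 V}
    (h : ∀ b ∈ S, ∀ p q : W, s(p, q) ∈ starEdges b → s(φ p, φ q) ≠ e) :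
    (S.image (mapStar φ)).filter (fun b => e ∈ starEdges b) = ∅ := by
  rw [Finset.filter_eq_empty_iff]
  intro b hb
  obtain ⟨b', hb', rfl⟩ := Finset.mem_image.1 hb
  rw [starEdges_mapStar]
  intro hmem
  obtain ⟨e', he', hee⟩ := Finset.mem_image.1 hmem
  induction e' using Sym2.ind with
  | _ p q => exact h b' hb' p q he' (by rw [← hee, Sym2.map_pair_eq])

lemma mem_biUnion_single {ι α : Type} [Fintype ι] [DecidableEq ι] [DecidableEq α]
    {f : ι → Finset α} (c₀ : ι) {x : α} (h : ∀ c, c ≠ c₀ → x ∉ f c) :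
    (x ∈ Finset.univ.biUnion f) ↔ x ∈ f c₀ := by
  simp only [Finset.mem_biUnion, Finset.mem_univ, true_and]
  constructor
  · rintro ⟨c, hc⟩
    by_cases hcc : c = c₀
    · rwa [hcc] at hc
    · exact absurd hc (h c hcc)
  · exact fun hc => ⟨c₀, hc⟩

lemma not_mem_biUnion {ι α : Type} [Fintype ι] [DecidableEq ι] [DecidableEq α]
    {f : ι → Finset α} {x : α} (h : ∀ c, x ∉ f c) :
    x ∉ Finset.univ.biUnion f := by
  simp only [Finset.mem_biUnion, Finset.mem_univ, true_and, not_exists]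
  exact h

lemma filter_biUnion_single {ι α : Type} [Fintype ι] [DecidableEq ι] [DecidableEq α]
    {f : ι → Finset α} {p : α → Prop} [DecidablePred p] (c₀ : ι)
    (h : ∀ c, c ≠ c₀ → (f c).filter p = ∅) :
    (Finset.univ.biUnion f).filter p = (f c₀).filter p := by
  rw [Finset.filter_biUnion]
  ext x
  simp only [Finset.mem_biUnion, Finset.mem_univ, true_and]
  constructor
  · rintro ⟨c, hc⟩
    by_cases hcc : c = c₀
    · rwa [hcc] at hc
    · rw [h c hcc] at hc; exact absurd hc (Finset.notMem_empty x)
  · exact fun hc => ⟨c₀, hc⟩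

lemma filter_biUnion_zero {ι α : Type} [Fintype ι] [DecidableEq ι] [DecidableEq α]
    {f : ι → Finset α} {p : α → Prop} [DecidablePred p]
    (h : ∀ c, (f c).filter p = ∅) :
    (Finset.univ.biUnion f).filter p = ∅ := by
  rw [Finset.filter_biUnion]
  simp only [h]
  apply Finset.ext; simp

end Helpers3
section Helpers4

open Function

lemma hasUniformDecomp_of_index {V : Type} [Fintype V] [DecidableEq V]
    {E : Finset (Sym2 V)} {r s : ℕ} {ι₁ ι₂ : Type} [Fintype ι₁] [Fintype ι₂]
    (e₁ : ι₁ ≃ Fin r) (e₂ : ι₂ ≃ Fin s)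
    (M : ι₁ → Finset (Sym2 V)) (S : ι₂ → Finset (V × Finset V))
    (hM : ∀ i, IsMatchingClass E Finset.univ (M i))
    (hS : ∀ j, IsStarClass E Finset.univ (S j))
    (hcount : ∀ e ∈ E, (∑ i, if e ∈ M i then 1 else 0)
      + (∑ j, ((S j).filter (fun b => e ∈ starEdges b)).card) = 1) :
    HasUniformDecomp E r s := by
  refine ⟨fun i => i.elim0, fun i => i.elim0, fun i => M (e₁.symm i), fun j => S (e₂.symm j),
    fun i => i.elim0, fun i => i.elim0, fun i => hM _, fun j => hS _, ?_⟩
  intro e he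
  have h1 : (∑ i : Fin r, if e ∈ M (e₁.symm i) then 1 else 0)
      = ∑ i : ι₁, if e ∈ M i then 1 else 0 :=
    (Fintype.sum_equiv e₁ _ _ (fun i => by rw [Equiv.symm_apply_apply])).symm
  have h2 : (∑ j : Fin s, ((S (e₂.symm j)).filter (fun b => e ∈ starEdges b)).card)
      = ∑ j : ι₂, ((S j).filter (fun b => e ∈ starEdges b)).card :=
    (Fintype.sum_equiv e₂ _ _ (fun j => by rw [Equiv.symm_apply_apply])).symm
  simp only [Finset.univ_eq_empty, Finset.sum_empty, Finset.sum_const_zero]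
  rw [h1, h2]
  simpa using hcount e he

lemma hasUniformDecomp_equiv {V V' : Type} [Fintype V] [DecidableEq V]
    [Fintype V'] [DecidableEq V'] (θ : V ≃ V') {r s : ℕ}
    (h : HasUniformDecomp (completeEdges V) r s) :
    HasUniformDecomp (completeEdges V') r s := by
  obtain ⟨M₁, S₁, M₂, S₂, _, _, h₃, h₄, h₅⟩ := h
  have hE : ∀ e ∈ completeEdges V, Sym2.map θ e ∈ completeEdges V' := by
    intro e he
    induction e using Sym2.ind with
    | _ p q =>
      rw [Sym2.map_pair_eq, mk_mem_completeEdges]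
      rw [mk_mem_completeEdges] at he
      exact fun hh => he (θ.injective hh)
  refine ⟨fun i => i.elim0, fun i => i.elim0,
    fun i => (M₂ i).image (Sym2.map θ), fun j => (S₂ j).image (mapStar θ),
    fun i => i.elim0, fun i => i.elim0, ?_, ?_, ?_⟩
  · intro i
    have := IsMatchingClass.map θ θ.injective hE (h₃ i)
    rwa [Finset.image_univ_equiv] at this
  · intro j
    have := IsStarClass.map θ θ.injective hE (h₄ j)
    rwa [Finset.image_univ_equiv] at this
  · intro e' he'
    induction e' using Sym2.ind with
    | _ x y =>
      rw [mk_mem_completeEdges] at he'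
      have hee : s(x, y) = Sym2.map θ s(θ.symm x, θ.symm y) := by
        rw [Sym2.map_pair_eq, Equiv.apply_symm_apply, Equiv.apply_symm_apply]
      have hmem : s(θ.symm x, θ.symm y) ∈ completeEdges V := by
        rw [mk_mem_completeEdges]
        exact fun hh => he' (by rw [← Equiv.apply_symm_apply θ x, hh, Equiv.apply_symm_apply])
      have := h₅ _ hmem
      simp only [Finset.univ_eq_empty, Finset.sum_empty, Finset.sum_const_zero,
        Nat.zero_add, Nat.add_zero] at this ⊢
      rw [hee]
      calc (∑ i, if Sym2.map θ s(θ.symm x, θ.symm y) ∈ (M₂ i).image (Sym2.map θ) then 1 else 0)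
            + ∑ j, (((S₂ j).image (mapStar θ)).filter
                (fun b => Sym2.map θ s(θ.symm x, θ.symm y) ∈ starEdges b)).card
          = (∑ i, if s(θ.symm x, θ.symm y) ∈ M₂ i then 1 else 0)
            + ∑ j, ((S₂ j).filter (fun b => s(θ.symm x, θ.symm y) ∈ starEdges b)).card := by
            congr 1
            · exact Finset.sum_congr rfl (fun i _ => by
                rw [if_congr (map_mem_image_iff θ.injective) rfl rfl])
            · exact Finset.sum_congr rfl (fun j _ => card_filter_image_star θ.injective)
        _ = 1 := by simpa using this

lemma exists_enum_of_card_four {α : Type} [DecidableEq α] {b : Finset α}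
    (hb : b.card = 4) : ∃ e : Fin 4 → α, Injective e ∧ ∀ x, x ∈ b ↔ ∃ q, e q = x := by
  have eqv : {x // x ∈ b} ≃ Fin 4 := Finset.equivFinOfCardEq hb
  refine ⟨fun q => (eqv.symm q : α), ?_, ?_⟩
  · intro q₁ q₂ hq
    have := Subtype.ext hq
    exact eqv.symm.injective this
  · intro x
    constructor
    · intro hx
      exact ⟨eqv ⟨x, hx⟩, by simp⟩
    · rintro ⟨q, rfl⟩
      exact (eqv.symm q).2

end Helpers4
section Helpers5

open Function

/-- Embedding of the `j`-th group (with hole) into the global vertex type. -/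
def psi (g t hh : ℕ) {u : ℕ} (j : Fin u) :
    Fin (g * t) ⊕ Fin hh → ((Fin u × Fin g) × Fin t) ⊕ Fin hh
  | Sum.inl a => Sum.inl ((j, (finProdFinEquiv.symm a).1), (finProdFinEquiv.symm a).2)
  | Sum.inr c => Sum.inr c

lemma psi_injective (g t hh : ℕ) {u : ℕ} (j : Fin u) : Injective (psi g t hh j) := by
  rintro (a | c) (a' | c') hac <;> simp only [psi, Sum.inl.injEq, Sum.inr.injEq,
    Prod.mk.injEq] at hac
  · obtain ⟨⟨_, h1⟩, h2⟩ := hac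
    have : finProdFinEquiv.symm a = finProdFinEquiv.symm a' := Prod.ext h1 h2
    rw [finProdFinEquiv.symm.injective this]
  · exact absurd hac (by simp)
  · exact absurd hac (by simp)
  · rw [hac]

lemma mem_image_psi_left {g t hh u : ℕ} (j : Fin u)
    (x : ((Fin u × Fin g) × Fin t) ⊕ Fin hh) :
    x ∈ (Finset.univ.filter (fun z : Fin (g * t) ⊕ Fin hh => z.isLeft)).image (psi g t hh j)
      ↔ ∃ w t', x = Sum.inl ((j, w), t') := by
  constructor
  · intro hx
    obtain ⟨z, hz, rfl⟩ := Finset.mem_image.1 hx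
    rw [Finset.mem_filter] at hz
    rcases z with a | c
    · exact ⟨_, _, rfl⟩
    · simp at hz
  · rintro ⟨w, t', rfl⟩
    refine Finset.mem_image.2 ⟨Sum.inl (finProdFinEquiv (w, t')), by simp, ?_⟩
    simp [psi]

lemma mem_image_psi_univ {g t hh u : ℕ} (j : Fin u)
    (x : ((Fin u × Fin g) × Fin t) ⊕ Fin hh) :
    x ∈ (Finset.univ : Finset (Fin (g * t) ⊕ Fin hh)).image (psi g t hh j)
      ↔ (∃ w t', x = Sum.inl ((j, w), t')) ∨ x.isRight := by
  constructor
  · intro hx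
    obtain ⟨z, _, rfl⟩ := Finset.mem_image.1 hx
    rcases z with a | c
    · exact Or.inl ⟨_, _, rfl⟩
    · exact Or.inr rfl
  · rintro (⟨w, t', rfl⟩ | hr)
    · refine Finset.mem_image.2 ⟨Sum.inl (finProdFinEquiv (w, t')), by simp, ?_⟩
      simp [psi]
    · rcases x with a | c
      · simp at hr
      · exact Finset.mem_image.2 ⟨Sum.inr c, by simp, rfl⟩

/-- Embedding of an expanded block into the global vertex type. -/
def blkEmb {u g : ℕ} (t hh : ℕ) (e4 : Fin 4 → Fin u × Fin g) (z : Fin 4 × Fin t) :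
    ((Fin u × Fin g) × Fin t) ⊕ Fin hh :=
  Sum.inl (e4 z.1, z.2)

lemma blkEmb_injective {u g : ℕ} (t hh : ℕ) {e4 : Fin 4 → Fin u × Fin g}
    (he : Injective e4) : Injective (blkEmb t hh e4) := by
  rintro ⟨q, s⟩ ⟨q', s'⟩ hq
  simp only [blkEmb, Sum.inl.injEq, Prod.mk.injEq] at hq
  exact Prod.ext (he hq.1) hq.2

lemma mem_image_blkEmb {u g t hh : ℕ} (e4 : Fin 4 → Fin u × Fin g)
    (x : ((Fin u × Fin g) × Fin t) ⊕ Fin hh) :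
    x ∈ (Finset.univ : Finset (Fin 4 × Fin t)).image (blkEmb t hh e4)
      ↔ ∃ q t', x = Sum.inl (e4 q, t') := by
  constructor
  · intro hx
    obtain ⟨⟨q, s⟩, _, rfl⟩ := Finset.mem_image.1 hx
    exact ⟨q, s, rfl⟩
  · rintro ⟨q, t', rfl⟩
    exact Finset.mem_image.2 ⟨(q, t'), by simp, rfl⟩

lemma mem_image_inr {β : Type} [DecidableEq β] {hh : ℕ} (x : β ⊕ Fin hh) :
    x ∈ (Finset.univ : Finset (Fin hh)).image (Sum.inr : Fin hh → β ⊕ Fin hh)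
      ↔ x.isRight := by
  constructor
  · intro hx
    obtain ⟨c, _, rfl⟩ := Finset.mem_image.1 hx
    rfl
  · intro hx
    rcases x with a | c
    · simp at hx
    · exact Finset.mem_image.2 ⟨c, by simp, rfl⟩

variable {V : Type} [DecidableEq V]

lemma glue_matching_two {E : Finset (Sym2 V)} {Q P₁ P₂ : Finset V}
    {M₁ M₂ : Finset (Sym2 V)}
    (h1 : IsMatchingClass E P₁ M₁) (h2 : IsMatchingClass E P₂ M₂)
    (hsub₁ : P₁ ⊆ Q) (hsub₂ : P₂ ⊆ Q)
    (hcov : ∀ x ∈ Q, (x ∈ P₁ ∧ x ∉ P₂) ∨ (x ∈ P₂ ∧ x ∉ P₁)) :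
    IsMatchingClass E Q (M₁ ∪ M₂) := by
  refine ⟨?_, ?_, ?_⟩
  · intro e he
    rcases Finset.mem_union.1 he with he | he
    · exact h1.1 _ he
    · exact h2.1 _ he
  · intro e he x hx
    rcases Finset.mem_union.1 he with he | he
    · exact hsub₁ (h1.2.1 _ he _ hx)
    · exact hsub₂ (h2.2.1 _ he _ hx)
  · intro x hx
    rcases hcov x hx with ⟨hx₁, hx₂⟩ | ⟨hx₂, hx₁⟩
    · obtain ⟨e, ⟨heM, hxe⟩, huniq⟩ := h1.2.2 x hx₁
      refine ⟨e, ⟨Finset.mem_union_left _ heM, hxe⟩, ?_⟩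
      rintro e' ⟨he', hxe'⟩
      rcases Finset.mem_union.1 he' with he' | he'
      · exact huniq e' ⟨he', hxe'⟩
      · exact absurd (h2.2.1 _ he' _ hxe') hx₂
    · obtain ⟨e, ⟨heM, hxe⟩, huniq⟩ := h2.2.2 x hx₂
      refine ⟨e, ⟨Finset.mem_union_right _ heM, hxe⟩, ?_⟩
      rintro e' ⟨he', hxe'⟩
      rcases Finset.mem_union.1 he' with he' | he'
      · exact absurd (h1.2.1 _ he' _ hxe') hx₁
      · exact huniq e' ⟨he', hxe'⟩

lemma glue_star_two {E : Finset (Sym2 V)} {Q P₁ P₂ : Finset V}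
    {C₁ C₂ : Finset (V × Finset V)}
    (h1 : IsStarClass E P₁ C₁) (h2 : IsStarClass E P₂ C₂)
    (hsub₁ : P₁ ⊆ Q) (hsub₂ : P₂ ⊆ Q)
    (hcov : ∀ x ∈ Q, (x ∈ P₁ ∧ x ∉ P₂) ∨ (x ∈ P₂ ∧ x ∉ P₁)) :
    IsStarClass E Q (C₁ ∪ C₂) := by
  constructor
  · intro b hb
    rcases Finset.mem_union.1 hb with hb | hb
    · obtain ⟨a1, a2, a3, a4⟩ := h1.1 b hb
      exact ⟨a1, a2, a3, a4.trans hsub₁⟩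
    · obtain ⟨a1, a2, a3, a4⟩ := h2.1 b hb
      exact ⟨a1, a2, a3, a4.trans hsub₂⟩
  · intro x hx
    rcases hcov x hx with ⟨hx₁, hx₂⟩ | ⟨hx₂, hx₁⟩
    · obtain ⟨b, ⟨hbC, hxb⟩, huniq⟩ := h1.2 x hx₁
      refine ⟨b, ⟨Finset.mem_union_left _ hbC, hxb⟩, ?_⟩
      rintro b' ⟨hb', hxb'⟩
      rcases Finset.mem_union.1 hb' with hb' | hb'
      · exact huniq b' ⟨hb', hxb'⟩
      · exact absurd (((h2.1 b' hb').2.2.2) hxb') hx₂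
    · obtain ⟨b, ⟨hbC, hxb⟩, huniq⟩ := h2.2 x hx₂
      refine ⟨b, ⟨Finset.mem_union_right _ hbC, hxb⟩, ?_⟩
      rintro b' ⟨hb', hxb'⟩
      rcases Finset.mem_union.1 hb' with hb' | hb'
      · exact absurd (((h1.1 b' hb').2.2.2) hxb') hx₁
      · exact huniq b' ⟨hb', hxb'⟩

end Helpers5
section Helpers6

open Function

variable {u g tt hh : ℕ}

/-- Global vertex type of the construction. -/
abbrev GV (u g tt hh : ℕ) : Type := ((Fin u × Fin g) × Fin tt) ⊕ Fin hh

/-- The points outside group `j` and outside the hole. -/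
def PoutSet (u g tt hh : ℕ) (j : Fin u) : Finset (GV u g tt hh) :=
  Finset.univ.filter (fun x => ∃ w : (Fin u × Fin g) × Fin tt, x = Sum.inl w ∧ w.1.1 ≠ j)

lemma mem_PoutSet {j : Fin u} {x : GV u g tt hh} :
    x ∈ PoutSet u g tt hh j ↔ ∃ w t', x = Sum.inl (w, t') ∧ w.1 ≠ j := by
  simp only [PoutSet, Finset.mem_filter, Finset.mem_univ, true_and]
  constructor
  · rintro ⟨⟨w, t'⟩, rfl, hw⟩
    exact ⟨w, t', rfl, hw⟩
  · rintro ⟨w, t', rfl, hw⟩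
    exact ⟨(w, t'), rfl, hw⟩

/-- The expanded partial matching class outside one group, obtained by
placing a copy of a URGDD matching class on each expanded block. -/
def outM (C : Finset (Finset (Fin u × Fin g)))
    (eb : {x // x ∈ C} → Fin 4 → Fin u × Fin g)
    (G : Finset (Sym2 (Fin 4 × Fin tt))) : Finset (Sym2 (GV u g tt hh)) :=
  Finset.univ.biUnion (fun b : {x // x ∈ C} => G.image (Sym2.map (blkEmb tt hh (eb b))))

/-- The expanded partial star class outside one group. -/
def outS (C : Finset (Finset (Fin u × Fin g)))
    (eb : {x // x ∈ C} → Fin 4 → Fin u × Fin g)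
    (G : Finset ((Fin 4 × Fin tt) × Finset (Fin 4 × Fin tt))) :
    Finset (GV u g tt hh × Finset (GV u g tt hh)) :=
  Finset.univ.biUnion (fun b : {x // x ∈ C} => G.image (mapStar (blkEmb tt hh (eb b))))

/-- A full matching class of the first kind: hole class together with
one partial class in each group. -/
def t1M (HMm : Finset (Sym2 (Fin hh)))
    (IMm : Fin u → Finset (Sym2 (Fin (g * tt) ⊕ Fin hh))) : Finset (Sym2 (GV u g tt hh)) :=
  Finset.univ.biUnion (fun c : Option (Fin u) =>
    c.elim (HMm.image (Sym2.map (Sum.inr : Fin hh → GV u g tt hh)))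
      (fun j => (IMm j).image (Sym2.map (psi g tt hh j))))

/-- A full star class of the first kind. -/
def t1S (HSm : Finset (Fin hh × Finset (Fin hh)))
    (ISm : ∀ _ : Fin u, Finset ((Fin (g * tt) ⊕ Fin hh) × Finset (Fin (g * tt) ⊕ Fin hh))) :
    Finset (GV u g tt hh × Finset (GV u g tt hh)) :=
  Finset.univ.biUnion (fun c : Option (Fin u) =>
    c.elim (HSm.image (mapStar (Sum.inr : Fin hh → GV u g tt hh)))
      (fun j => (ISm j).image (mapStar (psi g tt hh j))))

end Helpers6
section Helpers7

open Function

variable {V : Type} [DecidableEq V] {W : Type} [DecidableEq W]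

lemma match_image_zero_local {φ : W → V} {M E₀ : Finset (Sym2 W)} {e : Sym2 V}
    (hME : ∀ e' ∈ M, e' ∈ E₀) (h : ∀ p q, s(p, q) ∈ E₀ → s(φ p, φ q) ≠ e) :
    e ∉ M.image (Sym2.map φ) :=
  match_image_zero (fun p q hm => h p q (hME _ hm))

lemma star_filter_zero_local {φ : W → V} {S : Finset (W × Finset W)}
    {E₀ : Finset (Sym2 W)} {e : Sym2 V}
    (hSE : ∀ b ∈ S, starEdges b ⊆ E₀) (h : ∀ p q, s(p, q) ∈ E₀ → s(φ p, φ q) ≠ e) :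
    (S.image (mapStar φ)).filter (fun b => e ∈ starEdges b) = ∅ :=
  star_filter_zero (fun b hb p q hpq => h p q (hSE b hb hpq))

lemma starEdges_endpoints {b : V × Finset V} {e' : Sym2 V} (he' : e' ∈ starEdges b) :
    ∀ x ∈ e', x ∈ starVerts b := by
  obtain ⟨l, hl, rfl⟩ := mem_starEdges_iff.1 he'
  intro x hx
  rcases Sym2.mem_iff.1 hx with rfl | rfl
  · exact Finset.mem_insert_self _ _
  · exact Finset.mem_insert_of_mem hl

variable {u g tt hh : ℕ}

lemma holey_map_complete (j : Fin u) :
    ∀ e ∈ holeyEdges (g * tt) hh, Sym2.map (psi g tt hh j) e ∈ completeEdges (GV u g tt hh) := by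
  intro e he
  induction e using Sym2.ind with
  | _ p q =>
    rw [mk_mem_holeyEdges] at he
    rw [Sym2.map_pair_eq, mk_mem_completeEdges]
    exact fun hc => he.1 (psi_injective g tt hh j hc)

lemma hole_map_complete :
    ∀ e ∈ completeEdges (Fin hh),
      Sym2.map (Sum.inr : Fin hh → GV u g tt hh) e ∈ completeEdges (GV u g tt hh) := by
  intro e he
  induction e using Sym2.ind with
  | _ p q =>
    rw [mk_mem_completeEdges] at he
    rw [Sym2.map_pair_eq, mk_mem_completeEdges]
    exact fun hc => he (Sum.inr_injective hc)

lemma multi_map_complete {e4 : Fin 4 → Fin u × Fin g} (he4 : Injective e4) :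
    ∀ e ∈ multipartiteEdges 4 tt,
      Sym2.map (blkEmb tt hh e4) e ∈ completeEdges (GV u g tt hh) := by
  intro e he
  induction e using Sym2.ind with
  | _ p q =>
    rw [mk_mem_multipartiteEdges] at he
    rw [Sym2.map_pair_eq, mk_mem_completeEdges]
    intro hc
    exact he (congrArg Prod.fst (blkEmb_injective tt hh he4 hc))

lemma outM_isClass (j : Fin u) {C : Finset (Finset (Fin u × Fin g))}
    {eb : {x // x ∈ C} → Fin 4 → Fin u × Fin g}
    (hebI : ∀ b, Injective (eb b))
    (hebM : ∀ b x, x ∈ b.1 ↔ ∃ q, eb b q = x)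
    (hsubC : ∀ blk ∈ C, ∀ w ∈ blk, w.1 ≠ j)
    (hcov : ∀ w : Fin u × Fin g, w.1 ≠ j → ∃! blk, blk ∈ C ∧ w ∈ blk)
    {G : Finset (Sym2 (Fin 4 × Fin tt))}
    (hG : IsMatchingClass (multipartiteEdges 4 tt) Finset.univ G) :
    IsMatchingClass (completeEdges (GV u g tt hh)) (PoutSet u g tt hh j)
      (outM C eb G : Finset (Sym2 (GV u g tt hh))) := by
  apply glue_matchingClass
    (P := fun b : {x // x ∈ C} => Finset.univ.image (blkEmb tt hh (eb b)))
  · intro b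
    have := IsMatchingClass.map (blkEmb tt hh (eb b)) (blkEmb_injective tt hh (hebI b))
      (multi_map_complete (hebI b)) hG
    exact this
  · intro b x hx
    rw [mem_image_blkEmb] at hx
    obtain ⟨q, t', rfl⟩ := hx
    exact mem_PoutSet.2 ⟨eb b q, t', rfl, hsubC b.1 b.2 _ ((hebM b _).2 ⟨q, rfl⟩)⟩
  · intro x hx
    obtain ⟨w, t', rfl, hw⟩ := mem_PoutSet.1 hx
    obtain ⟨blk, ⟨hblkC, hwblk⟩, huniq⟩ := hcov w hw
    have hmem : ∀ b : {x // x ∈ C}, Sum.inl (w, t') ∈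
        Finset.univ.image (blkEmb tt hh (eb b)) ↔ w ∈ b.1 := by
      intro b
      rw [mem_image_blkEmb]
      constructor
      · rintro ⟨q, t'', heq⟩
        obtain ⟨h1, h2⟩ : w = eb b q ∧ t' = t'' := by simpa [Prod.ext_iff] using heq
        exact h1 ▸ (hebM b _).2 ⟨q, rfl⟩
      · intro hwb
        obtain ⟨q, hq⟩ := (hebM b _).1 hwb
        exact ⟨q, t', by rw [hq]⟩
    refine ⟨⟨blk, hblkC⟩, (hmem _).2 hwblk, ?_⟩
    rintro b hb
    exact Subtype.ext (huniq b.1 ⟨b.2, (hmem b).1 hb⟩)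

lemma outS_isClass (j : Fin u) {C : Finset (Finset (Fin u × Fin g))}
    {eb : {x // x ∈ C} → Fin 4 → Fin u × Fin g}
    (hebI : ∀ b, Injective (eb b))
    (hebM : ∀ b x, x ∈ b.1 ↔ ∃ q, eb b q = x)
    (hsubC : ∀ blk ∈ C, ∀ w ∈ blk, w.1 ≠ j)
    (hcov : ∀ w : Fin u × Fin g, w.1 ≠ j → ∃! blk, blk ∈ C ∧ w ∈ blk)
    {G : Finset ((Fin 4 × Fin tt) × Finset (Fin 4 × Fin tt))}
    (hG : IsStarClass (multipartiteEdges 4 tt) Finset.univ G) :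
    IsStarClass (completeEdges (GV u g tt hh)) (PoutSet u g tt hh j)
      (outS C eb G : Finset (GV u g tt hh × Finset (GV u g tt hh))) := by
  apply glue_starClass
    (P := fun b : {x // x ∈ C} => Finset.univ.image (blkEmb tt hh (eb b)))
  · intro b
    exact IsStarClass.map (blkEmb tt hh (eb b)) (blkEmb_injective tt hh (hebI b))
      (multi_map_complete (hebI b)) hG
  · intro b x hx
    rw [mem_image_blkEmb] at hx
    obtain ⟨q, t', rfl⟩ := hx
    exact mem_PoutSet.2 ⟨eb b q, t', rfl, hsubC b.1 b.2 _ ((hebM b _).2 ⟨q, rfl⟩)⟩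
  · intro x hx
    obtain ⟨w, t', rfl, hw⟩ := mem_PoutSet.1 hx
    obtain ⟨blk, ⟨hblkC, hwblk⟩, huniq⟩ := hcov w hw
    have hmem : ∀ b : {x // x ∈ C}, Sum.inl (w, t') ∈
        Finset.univ.image (blkEmb tt hh (eb b)) ↔ w ∈ b.1 := by
      intro b
      rw [mem_image_blkEmb]
      constructor
      · rintro ⟨q, t'', heq⟩
        obtain ⟨h1, h2⟩ : w = eb b q ∧ t' = t'' := by simpa [Prod.ext_iff] using heq
        exact h1 ▸ (hebM b _).2 ⟨q, rfl⟩
      · intro hwb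
        obtain ⟨q, hq⟩ := (hebM b _).1 hwb
        exact ⟨q, t', by rw [hq]⟩
    refine ⟨⟨blk, hblkC⟩, (hmem _).2 hwblk, ?_⟩
    rintro b hb
    exact Subtype.ext (huniq b.1 ⟨b.2, (hmem b).1 hb⟩)

end Helpers7
section Helpers8

open Function

variable {u g tt hh : ℕ}

lemma cover_option (x : GV u g tt hh) :
    ∃! c : Option (Fin u), x ∈ c.elim
      ((Finset.univ : Finset (Fin hh)).image (Sum.inr : Fin hh → GV u g tt hh))
      (fun j => (Finset.univ.filter (fun z : Fin (g * tt) ⊕ Fin hh => z.isLeft)).image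
        (psi g tt hh j)) := by
  rcases x with ⟨⟨j, w⟩, t'⟩ | c
  · refine ⟨some j, (mem_image_psi_left j _).2 ⟨w, t', rfl⟩, ?_⟩
    rintro (_ | j') hm
    · rw [Option.elim, mem_image_inr] at hm
      simp at hm
    · rw [Option.elim, mem_image_psi_left] at hm
      obtain ⟨w', t'', heq⟩ := hm
      obtain ⟨h1, -⟩ : (j', w') = (j, w) ∧ t'' = t' := by simpa [Prod.ext_iff] using heq.symm
      exact congrArg some (Prod.ext_iff.1 h1).1
  · refine ⟨none, (mem_image_inr _).2 rfl, ?_⟩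
    rintro (_ | j') hm
    · rfl
    · rw [Option.elim, mem_image_psi_left] at hm
      obtain ⟨w', t'', heq⟩ := hm
      exact absurd heq (by simp)

lemma t1M_isClass {HMm : Finset (Sym2 (Fin hh))}
    {IMm : Fin u → Finset (Sym2 (Fin (g * tt) ⊕ Fin hh))}
    (hH : IsMatchingClass (completeEdges (Fin hh)) Finset.univ HMm)
    (hIM : ∀ j, IsMatchingClass (holeyEdges (g * tt) hh)
      (Finset.univ.filter (fun x => x.isLeft)) (IMm j)) :
    IsMatchingClass (completeEdges (GV u g tt hh)) Finset.univ
      (t1M HMm IMm : Finset (Sym2 (GV u g tt hh))) := by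
  apply glue_matchingClass (P := fun c : Option (Fin u) => c.elim
      ((Finset.univ : Finset (Fin hh)).image (Sum.inr : Fin hh → GV u g tt hh))
      (fun j => (Finset.univ.filter (fun z : Fin (g * tt) ⊕ Fin hh => z.isLeft)).image
        (psi g tt hh j)))
  · rintro (_ | j)
    · have := IsMatchingClass.map (Sum.inr : Fin hh → GV u g tt hh)
        Sum.inr_injective hole_map_complete hH
      exact this
    · exact IsMatchingClass.map (psi g tt hh j) (psi_injective g tt hh j)
        (holey_map_complete j) (hIM j)
  · rintro (_ | j) <;> exact fun x _ => Finset.mem_univ x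
  · exact fun x _ => cover_option x

lemma t1S_isClass {HSm : Finset (Fin hh × Finset (Fin hh))}
    {ISm : ∀ _ : Fin u, Finset ((Fin (g * tt) ⊕ Fin hh) × Finset (Fin (g * tt) ⊕ Fin hh))}
    (hH : IsStarClass (completeEdges (Fin hh)) Finset.univ HSm)
    (hIS : ∀ j, IsStarClass (holeyEdges (g * tt) hh)
      (Finset.univ.filter (fun x => x.isLeft)) (ISm j)) :
    IsStarClass (completeEdges (GV u g tt hh)) Finset.univ
      (t1S HSm ISm : Finset (GV u g tt hh × Finset (GV u g tt hh))) := by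
  apply glue_starClass (P := fun c : Option (Fin u) => c.elim
      ((Finset.univ : Finset (Fin hh)).image (Sum.inr : Fin hh → GV u g tt hh))
      (fun j => (Finset.univ.filter (fun z : Fin (g * tt) ⊕ Fin hh => z.isLeft)).image
        (psi g tt hh j)))
  · rintro (_ | j)
    · exact IsStarClass.map (Sum.inr : Fin hh → GV u g tt hh)
        Sum.inr_injective hole_map_complete hH
    · exact IsStarClass.map (psi g tt hh j) (psi_injective g tt hh j)
        (holey_map_complete j) (hIS j)
  · rintro (_ | j) <;> exact fun x _ => Finset.mem_univ x
  · exact fun x _ => cover_option x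

lemma cover_two (j : Fin u) (x : GV u g tt hh) (_ : x ∈ (Finset.univ : Finset (GV u g tt hh))) :
    (x ∈ (Finset.univ : Finset (Fin (g * tt) ⊕ Fin hh)).image (psi g tt hh j)
        ∧ x ∉ PoutSet u g tt hh j) ∨
    (x ∈ PoutSet u g tt hh j
        ∧ x ∉ (Finset.univ : Finset (Fin (g * tt) ⊕ Fin hh)).image (psi g tt hh j)) := by
  rcases x with ⟨⟨j', w⟩, t'⟩ | c
  · by_cases hj : j' = j
    · refine Or.inl ⟨(mem_image_psi_univ j _).2 (Or.inl ⟨w, t', by rw [hj]⟩), ?_⟩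
      intro hmem
      obtain ⟨w', t'', heq, hne⟩ := mem_PoutSet.1 hmem
      obtain ⟨h1, -⟩ : (j', w) = w' ∧ t' = t'' := by simpa [Prod.ext_iff] using heq
      exact hne (by rw [← h1, hj])
    · refine Or.inr ⟨mem_PoutSet.2 ⟨(j', w), t', rfl, hj⟩, ?_⟩
      intro hmem
      rcases (mem_image_psi_univ j _).1 hmem with ⟨w', t'', heq⟩ | hr
      · obtain ⟨h1, -⟩ : (j', w) = (j, w') ∧ t' = t'' := by simpa [Prod.ext_iff] using heq
        exact hj (Prod.ext_iff.1 h1).1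
      · simp at hr
  · refine Or.inl ⟨(mem_image_psi_univ j _).2 (Or.inr rfl), ?_⟩
    intro hmem
    obtain ⟨w', t'', heq, -⟩ := mem_PoutSet.1 hmem
    exact absurd heq (by simp)

lemma t2M_isClass (j : Fin u) {IMf : Finset (Sym2 (Fin (g * tt) ⊕ Fin hh))}
    {Out : Finset (Sym2 (GV u g tt hh))}
    (hIM : IsMatchingClass (holeyEdges (g * tt) hh) Finset.univ IMf)
    (hOut : IsMatchingClass (completeEdges (GV u g tt hh)) (PoutSet u g tt hh j) Out) :
    IsMatchingClass (completeEdges (GV u g tt hh)) Finset.univ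
      ((IMf.image (Sym2.map (psi g tt hh j))) ∪ Out) := by
  apply glue_matching_two (IsMatchingClass.map (psi g tt hh j) (psi_injective g tt hh j)
      (holey_map_complete j) hIM) hOut (fun x _ => Finset.mem_univ x)
      (fun x _ => Finset.mem_univ x)
  exact cover_two j

lemma t2S_isClass (j : Fin u)
    {ISf : Finset ((Fin (g * tt) ⊕ Fin hh) × Finset (Fin (g * tt) ⊕ Fin hh))}
    {Out : Finset (GV u g tt hh × Finset (GV u g tt hh))}
    (hIS : IsStarClass (holeyEdges (g * tt) hh) Finset.univ ISf)
    (hOut : IsStarClass (completeEdges (GV u g tt hh)) (PoutSet u g tt hh j) Out) :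
    IsStarClass (completeEdges (GV u g tt hh)) Finset.univ
      ((ISf.image (mapStar (psi g tt hh j))) ∪ Out) := by
  apply glue_star_two (IsStarClass.map (psi g tt hh j) (psi_injective g tt hh j)
      (holey_map_complete j) hIS) hOut (fun x _ => Finset.mem_univ x)
      (fun x _ => Finset.mem_univ x)
  exact cover_two j

end Helpers8
section Helpers9

open Function

variable {u g tt hh : ℕ}

@[simp] lemma psi_inl {j : Fin u} {a : Fin (g * tt)} :
    psi g tt hh j (Sum.inl a)
      = Sum.inl ((j, (finProdFinEquiv.symm a).1), (finProdFinEquiv.symm a).2) := rfl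

@[simp] lemma psi_inr {j : Fin u} {c : Fin hh} :
    psi g tt hh j (Sum.inr c) = (Sum.inr c : GV u g tt hh) := rfl

lemma psi_ne_of_notG {j : Fin u} {x y : GV u g tt hh}
    (hx : ∀ w t', x ≠ Sum.inl ((j, w), t'))
    (hy : ∀ w t', y ≠ Sum.inl ((j, w), t')) :
    ∀ p q, s(p, q) ∈ holeyEdges (g * tt) hh →
      s(psi g tt hh j p, psi g tt hh j q) ≠ s(x, y) := by
  have key : ∀ (a : Fin (g * tt)) (z : GV u g tt hh),
      (∀ w t', z ≠ Sum.inl ((j, w), t')) → psi g tt hh j (Sum.inl a) ≠ z := by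
    intro a z hz heq
    exact hz _ _ heq.symm
  intro p q hpq heq
  rw [mk_mem_holeyEdges] at hpq
  rcases Sym2.eq_iff.1 heq with ⟨h1, h2⟩ | ⟨h1, h2⟩
  · rcases p with a | c
    · exact key a x hx h1
    · rcases q with a' | c'
      · exact key a' y hy h2
      · exact hpq.2 ⟨rfl, rfl⟩
  · rcases p with a | c
    · exact key a y hy h1
    · rcases q with a' | c'
      · exact key a' x hx h2
      · exact hpq.2 ⟨rfl, rfl⟩

lemma psi_partial_match_zero {j : Fin u} {M : Finset (Sym2 (Fin (g * tt) ⊕ Fin hh))}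
    {x y : GV u g tt hh}
    (hMP : ∀ e' ∈ M, ∀ z ∈ e', Sum.isLeft z = true)
    (h : ∀ a a' : Fin (g * tt),
      s(psi g tt hh j (Sum.inl a), psi g tt hh j (Sum.inl a')) ≠ s(x, y)) :
    s(x, y) ∉ M.image (Sym2.map (psi g tt hh j)) := by
  apply match_image_zero
  intro p q hm heq
  rcases p with a | c
  · rcases q with a' | c'
    · exact h a a' heq
    · simpa using hMP _ hm (Sum.inr c') (Sym2.mem_mk_right _ _)
  · simpa using hMP _ hm (Sum.inr c) (Sym2.mem_mk_left _ _)

lemma psi_partial_star_zero {j : Fin u}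
    {S : Finset ((Fin (g * tt) ⊕ Fin hh) × Finset (Fin (g * tt) ⊕ Fin hh))}
    {x y : GV u g tt hh}
    (hSP : ∀ b ∈ S, ∀ z ∈ starVerts b, Sum.isLeft z = true)
    (h : ∀ a a' : Fin (g * tt),
      s(psi g tt hh j (Sum.inl a), psi g tt hh j (Sum.inl a')) ≠ s(x, y)) :
    (S.image (mapStar (psi g tt hh j))).filter (fun b => s(x, y) ∈ starEdges b) = ∅ := by
  apply star_filter_zero
  intro b hb p q hpq heq
  have hz := starEdges_endpoints hpq
  rcases p with a | c
  · rcases q with a' | c'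
    · exact h a a' heq
    · simpa using hSP _ hb (Sum.inr c') (hz _ (Sym2.mem_mk_right _ _))
  · simpa using hSP _ hb (Sum.inr c) (hz _ (Sym2.mem_mk_left _ _))

lemma blkEmb_ne {e4 : Fin 4 → Fin u × Fin g}
    (hG : ∀ q q' : Fin 4, q ≠ q' → (e4 q).1 ≠ (e4 q').1)
    {x y : GV u g tt hh}
    (hxy : ∀ (w₁ w₂ : Fin u × Fin g) (t₁ t₂ : Fin tt), w₁.1 ≠ w₂.1 →
      (∃ q₁ q₂ : Fin 4, e4 q₁ = w₁ ∧ e4 q₂ = w₂) →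
      s(Sum.inl (w₁, t₁), Sum.inl (w₂, t₂)) ≠ (s(x, y) : Sym2 (GV u g tt hh))) :
    ∀ p q, s(p, q) ∈ multipartiteEdges 4 tt →
      s(blkEmb tt hh e4 p, blkEmb tt hh e4 q) ≠ s(x, y) := by
  intro p q hpq heq
  rw [mk_mem_multipartiteEdges] at hpq
  exact hxy (e4 p.1) (e4 q.1) p.2 q.2 (hG _ _ hpq) ⟨p.1, q.1, rfl, rfl⟩ heq

lemma psi_ne_of_endpoint {j : Fin u} {x y : GV u g tt hh} (z : GV u g tt hh)
    (hz : z = x ∨ z = y)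
    (hz1 : ∀ w t', z ≠ Sum.inl ((j, w), t'))
    (hz2 : ∀ c, z ≠ Sum.inr c) :
    ∀ p q : Fin (g * tt) ⊕ Fin hh, s(p, q) ∈ holeyEdges (g * tt) hh →
      s(psi g tt hh j p, psi g tt hh j q) ≠ s(x, y) := by
  have key : ∀ p : Fin (g * tt) ⊕ Fin hh, psi g tt hh j p ≠ z := by
    rintro (a | c) heq
    · exact hz1 _ _ heq.symm
    · exact hz2 _ heq.symm
  intro p q _ heq
  rcases Sym2.eq_iff.1 heq with ⟨h1, h2⟩ | ⟨h1, h2⟩ <;> rcases hz with rfl | rfl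
  · exact key p h1
  · exact key q h2
  · exact key q h2
  · exact key p h1

end Helpers9
/-- Filling construction from a `4`-frame: if there exist a `4`-frame of type `g^u`, a
`(K₂, K_{1,3})`-URD(h; r₁, s₁), a `(K₂, K_{1,3})`-URGDD(r₂, s₂) of type `t⁴` for every
`(r₂, s₂) ∈ J₂`, and a `(K₂, K_{1,3})`-IURD(gt + h, h; [r₁, s₁], [r₃, s₃]) for every
`(r₃, s₃) ∈ J₃ = (g/3) ∗ J₂`, then for every choice of pairs `(r₃ʲ, s₃ʲ) ∈ J₃`,
`j = 1, …, u`, there exists a `(K₂, K_{1,3})`-URD(v + h; r₁ + Σⱼ r₃ʲ, s₁ + Σⱼ s₃ʲ)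
for `v = gtu`. -/
theorem frame_construction (g t u h v : ℕ) (hv : v = g * t * u)
    (r₁ s₁ : ℕ) (J₂ : Set (ℕ × ℕ))
    (h1 : Is4Frame g u)
    (h2 : IsURD h r₁ s₁)
    (h3 : ∀ p ∈ J₂, IsURGDD t 4 p.1 p.2)
    (h4 : ∀ p ∈ sumsOf (g / 3) J₂, IsIURD (g * t) h r₁ s₁ p.1 p.2) :
    ∀ f : Fin u → ℕ × ℕ, (∀ j, f j ∈ sumsOf (g / 3) J₂) →
      IsURD (v + h) (r₁ + ∑ j, (f j).1) (s₁ + ∑ j, (f j).2) := by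
  classical
  intro f hf
  obtain ⟨C, hC1, hC2⟩ := h1
  obtain ⟨_, _, HM, HS, _, _, hHM, hHS, hHcnt⟩ := h2
  have hf' : ∀ j, ∃ q : Fin (g / 3) → ℕ × ℕ, (∀ i, q i ∈ J₂) ∧
      f j = (∑ i, (q i).1, ∑ i, (q i).2) := hf
  choose p hpJ hpsum using hf'
  choose GM1 GS1 GM GS hG using fun (j : Fin u) (k : Fin (g / 3)) => h3 (p j k) (hpJ j k)
  choose IM1 IS1 IM2 IS2 hI using fun j => h4 (f j) (hf j)
  have hEB : ∀ (j : Fin u) (k : Fin (g / 3)) (b : {x // x ∈ C j k}),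
      ∃ e4 : Fin 4 → Fin u × Fin g, Function.Injective e4 ∧ ∀ x, x ∈ b.1 ↔ ∃ q, e4 q = x :=
    fun j k b => exists_enum_of_card_four ((hC1 j k).1 b.1 b.2).1
  choose eb hebI hebM using hEB
  have hebG : ∀ j k (b : {x // x ∈ C j k}) (q q' : Fin 4),
      q ≠ q' → (eb j k b q).1 ≠ (eb j k b q').1 := by
    intro j k b q q' hq
    have hmem : s(eb j k b q, eb j k b q') ∈ blockEdges b.1 :=
      mk_mem_blockEdges.2 ⟨(hebM j k b _).2 ⟨q, rfl⟩, (hebM j k b _).2 ⟨q', rfl⟩,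
        fun hqq => hq (hebI j k b hqq)⟩
    exact mk_mem_multipartiteEdges.1 (((hC1 j k).1 b.1 b.2).2.1 hmem)
  have hsubC : ∀ j k, ∀ blk ∈ C j k, ∀ w ∈ blk, w.1 ≠ j :=
    fun j k blk hblk w hw => (Finset.mem_filter.1 (((hC1 j k).1 blk hblk).2.2 hw)).2
  have hcovB : ∀ j k (w : Fin u × Fin g), w.1 ≠ j → ∃! blk, blk ∈ C j k ∧ w ∈ blk :=
    fun j k w hw => (hC1 j k).2 w (Finset.mem_filter.2 ⟨Finset.mem_univ _, hw⟩)
  have hcard1 : ∀ j, Fintype.card ((k : Fin (g / 3)) × Fin (p j k).1) = (f j).1 := by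
    intro j
    rw [Fintype.card_sigma]
    simp only [Fintype.card_fin]
    rw [hpsum j]
  have hcard2 : ∀ j, Fintype.card ((k : Fin (g / 3)) × Fin (p j k).2) = (f j).2 := by
    intro j
    rw [Fintype.card_sigma]
    simp only [Fintype.card_fin]
    rw [hpsum j]
  have σM : ∀ j, ((k : Fin (g / 3)) × Fin (p j k).1) ≃ Fin (f j).1 :=
    fun j => Fintype.equivFinOfCardEq (hcard1 j)
  have σS : ∀ j, ((k : Fin (g / 3)) × Fin (p j k).2) ≃ Fin (f j).2 :=
    fun j => Fintype.equivFinOfCardEq (hcard2 j)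
  have θ : GV u g t h ≃ Fin (v + h) := by
    apply Fintype.equivFinOfCardEq
    simp only [GV, Fintype.card_sum, Fintype.card_prod, Fintype.card_fin]
    rw [hv]; ring
  have hcM : Fintype.card (Fin r₁ ⊕ ((j : Fin u) × Fin (f j).1)) = r₁ + ∑ j, (f j).1 := by
    simp [Fintype.card_sigma]
  have hcS : Fintype.card (Fin s₁ ⊕ ((j : Fin u) × Fin (f j).2)) = s₁ + ∑ j, (f j).2 := by
    simp [Fintype.card_sigma]
  have goal' : HasUniformDecomp (completeEdges (GV u g t h))
      (r₁ + ∑ j, (f j).1) (s₁ + ∑ j, (f j).2) := by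
    refine hasUniformDecomp_of_index (Fintype.equivFinOfCardEq hcM)
      (Fintype.equivFinOfCardEq hcS)
      (Sum.elim (fun m => (t1M (HM m) (fun j => IM1 j m) : Finset (Sym2 (GV u g t h))))
        (fun jm => ((IM2 jm.1 jm.2).image (Sym2.map (psi g t h jm.1)))
          ∪ outM (C jm.1 ((σM jm.1).symm jm.2).1) (eb jm.1 ((σM jm.1).symm jm.2).1)
              (GM jm.1 ((σM jm.1).symm jm.2).1 ((σM jm.1).symm jm.2).2)))
      (Sum.elim (fun n => (t1S (HS n) (fun j => IS1 j n) :
            Finset (GV u g t h × Finset (GV u g t h))))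
        (fun jn => ((IS2 jn.1 jn.2).image (mapStar (psi g t h jn.1)))
          ∪ outS (C jn.1 ((σS jn.1).symm jn.2).1) (eb jn.1 ((σS jn.1).symm jn.2).1)
              (GS jn.1 ((σS jn.1).symm jn.2).1 ((σS jn.1).symm jn.2).2)))
      ?_ ?_ ?_
    · rintro (m | ⟨j, m⟩)
      · exact t1M_isClass (hHM m) (fun j => (hI j).1 m)
      · exact t2M_isClass j ((hI j).2.2.1 m)
          (outM_isClass j (hebI j _) (hebM j _) (hsubC j _) (hcovB j _)
            ((hG j ((σM j).symm m).1).2.2.1 ((σM j).symm m).2))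
    · rintro (n | ⟨j, n⟩)
      · exact t1S_isClass (hHS n) (fun j => (hI j).2.1 n)
      · exact t2S_isClass j ((hI j).2.2.2.1 n)
          (outS_isClass j (hebI j _) (hebM j _) (hsubC j _) (hcovB j _)
            ((hG j ((σS j).symm n).1).2.2.2.1 ((σS j).symm n).2))
    · -- the edge count
      intro e he
      have getG : ∀ (w : Fin u × Fin g) (tx : Fin t) (jj : Fin u) (α : Fin g) (β : Fin t),
          (Sum.inl (w, tx) : GV u g t h) = Sum.inl ((jj, α), β) → w.1 = jj := by
        intro w tx jj α β heq
        obtain ⟨h1, -⟩ : w = (jj, α) ∧ tx = β := by simpa [Prod.ext_iff] using heq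
        exact (Prod.ext_iff.1 h1).1
      have caseB : ∀ (j₀ : Fin u) (pp qq : Fin (g * t) ⊕ Fin h) (a₀ : Fin (g * t)),
          pp = Sum.inl a₀ → s(pp, qq) ∈ holeyEdges (g * t) h →
          ((∑ m : Fin r₁, if s(psi g t h j₀ pp, psi g t h j₀ qq) ∈ t1M (HM m) (fun j => IM1 j m) then 1 else 0)
          + (∑ j : Fin u, ∑ m : Fin (f j).1, if s(psi g t h j₀ pp, psi g t h j₀ qq) ∈ ((IM2 j m).image (Sym2.map (psi g t h j))) ∪ outM (C j ((σM j).symm m).1) (eb j ((σM j).symm m).1) (GM j ((σM j).symm m).1 ((σM j).symm m).2) then 1 else 0))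
          + ((∑ n : Fin s₁, ((t1S (HS n) (fun j => IS1 j n)).filter (fun b => s(psi g t h j₀ pp, psi g t h j₀ qq) ∈ starEdges b)).card)
          + (∑ j : Fin u, ∑ n : Fin (f j).2, ((((IS2 j n).image (mapStar (psi g t h j))) ∪ outS (C j ((σS j).symm n).1) (eb j ((σS j).symm n).1) (GS j ((σS j).symm n).1 ((σS j).symm n).2)).filter (fun b => s(psi g t h j₀ pp, psi g t h j₀ qq) ∈ starEdges b)).card)) = 1 := by
        intro j₀ pp qq a₀ hpp hpq
        subst hpp
        have hXs : psi g t h j₀ (Sum.inl a₀)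
            = Sum.inl ((j₀, (finProdFinEquiv.symm a₀).1), (finProdFinEquiv.symm a₀).2) := rfl
        have hYs : (∃ α β, psi g t h j₀ qq = Sum.inl (((j₀ : Fin u), α), β))
            ∨ (∃ c', psi g t h j₀ qq = Sum.inr c') := by
          rcases qq with aq | cq
          · exact Or.inl ⟨_, _, rfl⟩
          · exact Or.inr ⟨_, rfl⟩
        have hXne : ∀ c', psi g t h j₀ (Sum.inl a₀) ≠ Sum.inr c' := by simp
        have hZhole : ∀ p q : Fin h, s(p, q) ∈ completeEdges (Fin h) →
            s((Sum.inr p : GV u g t h), Sum.inr q) ≠ s(psi g t h j₀ (Sum.inl a₀), psi g t h j₀ qq) := by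
          intro p q _ heq
          rcases Sym2.eq_iff.1 heq with ⟨h1, -⟩ | ⟨-, h1⟩ <;> rw [hXs] at h1 <;> simp at h1
        have hZpsi : ∀ j : Fin u, j ≠ j₀ → ∀ p q, s(p, q) ∈ holeyEdges (g * t) h →
            s(psi g t h j p, psi g t h j q) ≠ s(psi g t h j₀ (Sum.inl a₀), psi g t h j₀ qq) := by
          intro j hj
          refine psi_ne_of_endpoint (psi g t h j₀ (Sum.inl a₀)) (Or.inl rfl) ?_ hXne
          intro w t' heq
          rw [hXs] at heq
          exact hj ((getG _ _ _ _ _ heq).symm)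
        have hZout : ∀ (j : Fin u) (k : Fin (g / 3)) (b : {x // x ∈ C j k}),
            ∀ (w₁' w₂' : Fin u × Fin g) (t₁' t₂' : Fin t), w₁'.1 ≠ w₂'.1 →
            (∃ q₁ q₂ : Fin 4, eb j k b q₁ = w₁' ∧ eb j k b q₂ = w₂') →
            s((Sum.inl (w₁', t₁') : GV u g t h), Sum.inl (w₂', t₂')) ≠ s(psi g t h j₀ (Sum.inl a₀), psi g t h j₀ qq) := by
          intro j k b w₁' w₂' t₁' t₂' hcross _ heq
          rcases hYs with ⟨α, β, hY⟩ | ⟨c', hY⟩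
          · apply hcross
            rcases Sym2.eq_iff.1 heq with ⟨h1, h2⟩ | ⟨h1, h2⟩
            · rw [hXs] at h1; rw [hY] at h2
              rw [getG _ _ _ _ _ h1, getG _ _ _ _ _ h2]
            · rw [hY] at h1; rw [hXs] at h2
              rw [getG _ _ _ _ _ h1, getG _ _ _ _ _ h2]
          · rw [hY] at heq
            rcases Sym2.eq_iff.1 heq with ⟨-, h2⟩ | ⟨h1, -⟩
            · simp at h2
            · simp at h1
        have hOutZero : ∀ (j : Fin u) (k : Fin (g / 3)) (G' : Finset (Sym2 (Fin 4 × Fin t))),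
            (∀ e' ∈ G', e' ∈ multipartiteEdges 4 t) →
            s(psi g t h j₀ (Sum.inl a₀), psi g t h j₀ qq) ∉ (outM (C j k) (eb j k) G' : Finset (Sym2 (GV u g t h))) := by
          intro j k G' hG'
          unfold outM
          apply not_mem_biUnion
          intro b
          exact match_image_zero_local hG' (blkEmb_ne (hebG j k b) (hZout j k b))
        have hT1 : (∑ m : Fin r₁, if s(psi g t h j₀ (Sum.inl a₀), psi g t h j₀ qq) ∈ t1M (HM m) (fun j => IM1 j m) then 1 else 0)
            = ∑ m : Fin r₁, if s(Sum.inl a₀, qq) ∈ IM1 j₀ m then 1 else 0 := by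
          refine Finset.sum_congr rfl (fun m _ => if_congr ?_ rfl rfl)
          unfold t1M
          refine Iff.trans (mem_biUnion_single (some j₀) ?_) ?_
          · rintro (_ | j) hc
            · exact match_image_zero_local (fun e' he' => (hHM m).1 e' he') hZhole
            · have hj : j ≠ j₀ := fun hjj => hc (by rw [hjj])
              exact match_image_zero_local ((hI j).1 m).1 (hZpsi j hj)
          · rw [← Sym2.map_pair_eq]
            exact map_mem_image_iff (psi_injective g t h j₀)
        have hT2 : (∑ j : Fin u, ∑ m : Fin (f j).1, if s(psi g t h j₀ (Sum.inl a₀), psi g t h j₀ qq) ∈ ((IM2 j m).image (Sym2.map (psi g t h j))) ∪ outM (C j ((σM j).symm m).1) (eb j ((σM j).symm m).1) (GM j ((σM j).symm m).1 ((σM j).symm m).2) then 1 else 0)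
            = ∑ m : Fin (f j₀).1, if s(Sum.inl a₀, qq) ∈ IM2 j₀ m then 1 else 0 := by
          refine (Finset.sum_eq_single_of_mem j₀ (Finset.mem_univ _) ?_).trans ?_
          · intro j _ hj
            refine Finset.sum_eq_zero (fun m _ => ?_)
            apply if_neg
            intro hm
            rcases Finset.mem_union.1 hm with hm | hm
            · exact match_image_zero_local ((hI j).2.2.1 m).1 (hZpsi j hj) hm
            · exact hOutZero j _ _
                (fun e' he' => ((hG j ((σM j).symm m).1).2.2.1 ((σM j).symm m).2).1 e' he') hm
          · refine Finset.sum_congr rfl (fun m _ => if_congr ?_ rfl rfl)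
            refine Iff.trans (Iff.trans Finset.mem_union (or_iff_left (hOutZero j₀ _ _
              (fun e' he' => ((hG j₀ ((σM j₀).symm m).1).2.2.1 ((σM j₀).symm m).2).1 e' he')))) ?_
            rw [← Sym2.map_pair_eq]
            exact map_mem_image_iff (psi_injective g t h j₀)
        have hOutZeroS : ∀ (j : Fin u) (k : Fin (g / 3))
            (G' : Finset ((Fin 4 × Fin t) × Finset (Fin 4 × Fin t))),
            (∀ b ∈ G', starEdges b ⊆ multipartiteEdges 4 t) →
            ((outS (C j k) (eb j k) G' : Finset (GV u g t h × Finset (GV u g t h))).filter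
              (fun b => s(psi g t h j₀ (Sum.inl a₀), psi g t h j₀ qq) ∈ starEdges b)) = ∅ := by
          intro j k G' hG'
          unfold outS
          apply filter_biUnion_zero
          intro b
          exact star_filter_zero_local hG' (blkEmb_ne (hebG j k b) (hZout j k b))
        have hT3 : (∑ n : Fin s₁, ((t1S (HS n) (fun j => IS1 j n)).filter (fun b => s(psi g t h j₀ (Sum.inl a₀), psi g t h j₀ qq) ∈ starEdges b)).card)
            = ∑ n : Fin s₁, ((IS1 j₀ n).filter (fun b => s(Sum.inl a₀, qq) ∈ starEdges b)).card := by
          refine Finset.sum_congr rfl (fun n _ => ?_)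
          unfold t1S
          rw [filter_biUnion_single (some j₀) ?_]
          · rw [← Sym2.map_pair_eq]
            exact card_filter_image_star (psi_injective g t h j₀)
          · rintro (_ | j) hc
            · exact star_filter_zero_local (fun b hb => ((hHS n).1 b hb).2.2.1) hZhole
            · have hj : j ≠ j₀ := fun hjj => hc (by rw [hjj])
              exact star_filter_zero_local (fun b hb => (((hI j).2.1 n).1 b hb).2.2.1) (hZpsi j hj)
        have hT4 : (∑ j : Fin u, ∑ n : Fin (f j).2, ((((IS2 j n).image (mapStar (psi g t h j))) ∪ outS (C j ((σS j).symm n).1) (eb j ((σS j).symm n).1) (GS j ((σS j).symm n).1 ((σS j).symm n).2)).filter (fun b => s(psi g t h j₀ (Sum.inl a₀), psi g t h j₀ qq) ∈ starEdges b)).card)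
            = ∑ n : Fin (f j₀).2, ((IS2 j₀ n).filter (fun b => s(Sum.inl a₀, qq) ∈ starEdges b)).card := by
          refine (Finset.sum_eq_single_of_mem j₀ (Finset.mem_univ _) ?_).trans ?_
          · intro j _ hj
            refine Finset.sum_eq_zero (fun n _ => ?_)
            rw [Finset.filter_union,
              star_filter_zero_local (fun b hb => (((hI j).2.2.2.1 n).1 b hb).2.2.1) (hZpsi j hj),
              Finset.empty_union,
              hOutZeroS j _ _ (fun b hb => ((((hG j ((σS j).symm n).1).2.2.2.1 ((σS j).symm n).2).1 b hb)).2.2.1),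
              Finset.card_empty]
          · refine Finset.sum_congr rfl (fun n _ => ?_)
            rw [Finset.filter_union,
              hOutZeroS j₀ _ _ (fun b hb => ((((hG j₀ ((σS j₀).symm n).1).2.2.2.1 ((σS j₀).symm n).2).1 b hb)).2.2.1),
              Finset.union_empty]
            rw [← Sym2.map_pair_eq]
            exact card_filter_image_star (psi_injective g t h j₀)
        have hloc := (hI j₀).2.2.2.2 s(Sum.inl a₀, qq) hpq
        rw [hT1, hT2, hT3, hT4]
        omega
      have key : ∀ x y : GV u g t h, x ≠ y → (Sum.isLeft x = true ∨ Sum.isRight y = true) →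
          ((∑ m : Fin r₁, if s(x, y) ∈ t1M (HM m) (fun j => IM1 j m) then 1 else 0)
          + (∑ j : Fin u, ∑ m : Fin (f j).1, if s(x, y) ∈ ((IM2 j m).image (Sym2.map (psi g t h j))) ∪ outM (C j ((σM j).symm m).1) (eb j ((σM j).symm m).1) (GM j ((σM j).symm m).1 ((σM j).symm m).2) then 1 else 0))
          + ((∑ n : Fin s₁, ((t1S (HS n) (fun j => IS1 j n)).filter (fun b => s(x, y) ∈ starEdges b)).card)
          + (∑ j : Fin u, ∑ n : Fin (f j).2, ((((IS2 j n).image (mapStar (psi g t h j))) ∪ outS (C j ((σS j).symm n).1) (eb j ((σS j).symm n).1) (GS j ((σS j).symm n).1 ((σS j).symm n).2)).filter (fun b => s(x, y) ∈ starEdges b)).card)) = 1 := by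
        intro x y hne hside
        rcases x with ⟨⟨j₁, w₁⟩, t₁⟩ | a
        · rcases y with ⟨⟨j₂, w₂⟩, t₂⟩ | c
          · by_cases hj : j₁ = j₂
            · subst hj
              have hxq : (Sum.inl ((j₁, w₁), t₁) : GV u g t h)
                  = psi g t h j₁ (Sum.inl (finProdFinEquiv (w₁, t₁))) := by simp
              have hyq : (Sum.inl ((j₁, w₂), t₂) : GV u g t h)
                  = psi g t h j₁ (Sum.inl (finProdFinEquiv (w₂, t₂))) := by simp
              rw [hxq, hyq]
              refine caseB j₁ _ _ (finProdFinEquiv (w₁, t₁)) rfl (mk_mem_holeyEdges.2 ⟨?_, by simp⟩)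
              intro heq
              apply hne
              have h2 : ((w₁, t₁) : Fin g × Fin t) = (w₂, t₂) :=
                finProdFinEquiv.injective (Sum.inl.inj heq)
              obtain ⟨h3, h4⟩ : w₁ = w₂ ∧ t₁ = t₂ := by simpa [Prod.ext_iff] using h2
              rw [h3, h4]
            · -- CASE C
              have hne' : ((j₁, w₁) : Fin u × Fin g) ≠ (j₂, w₂) := by
                intro hq
                exact hj (congrArg Prod.fst hq)
              have hbase : s(((j₁, w₁) : Fin u × Fin g), (j₂, w₂)) ∈ multipartiteEdges u g := mk_mem_multipartiteEdges.2 hj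
              have hZholeC : ∀ p q : Fin h, s(p, q) ∈ completeEdges (Fin h) →
                  s((Sum.inr p : GV u g t h), Sum.inr q) ≠ (s(Sum.inl ((j₁, w₁), t₁), Sum.inl ((j₂, w₂), t₂)) : Sym2 (GV u g t h)) := by
                intro p q _ heq
                rcases Sym2.eq_iff.1 heq with ⟨h1, -⟩ | ⟨-, h1⟩ <;> simp at h1
              have hZpsiC : ∀ j : Fin u, ∀ p q, s(p, q) ∈ holeyEdges (g * t) h →
                  s(psi g t h j p, psi g t h j q) ≠ (s(Sum.inl ((j₁, w₁), t₁), Sum.inl ((j₂, w₂), t₂)) : Sym2 (GV u g t h)) := by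
                intro j
                by_cases hjj : j = j₁
                · refine psi_ne_of_endpoint (Sum.inl ((j₂, w₂), t₂)) (Or.inr rfl) ?_ (by simp)
                  intro w t' heq
                  exact hj (((getG _ _ _ _ _ heq).trans hjj).symm)
                · refine psi_ne_of_endpoint (Sum.inl ((j₁, w₁), t₁)) (Or.inl rfl) ?_ (by simp)
                  intro w t' heq
                  exact hjj ((getG _ _ _ _ _ heq).symm)
              have hZIM2 : ∀ (j : Fin u) (m : Fin (f j).1),
                  (s(Sum.inl ((j₁, w₁), t₁), Sum.inl ((j₂, w₂), t₂)) : Sym2 (GV u g t h)) ∉ (IM2 j m).image (Sym2.map (psi g t h j)) :=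
                fun j m => match_image_zero_local ((hI j).2.2.1 m).1 (hZpsiC j)
              have hZIS2 : ∀ (j : Fin u) (n : Fin (f j).2),
                  ((IS2 j n).image (mapStar (psi g t h j))).filter
                    (fun b => (s(Sum.inl ((j₁, w₁), t₁), Sum.inl ((j₂, w₂), t₂)) : Sym2 (GV u g t h)) ∈ starEdges b) = ∅ :=
                fun j n => star_filter_zero_local
                  (fun b hb => (((hI j).2.2.2.1 n).1 b hb).2.2.1) (hZpsiC j)
              have hT1C : (∑ m : Fin r₁, if (s(Sum.inl ((j₁, w₁), t₁), Sum.inl ((j₂, w₂), t₂)) : Sym2 (GV u g t h)) ∈ t1M (HM m) (fun j => IM1 j m) then 1 else 0) = 0 := by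
                refine Finset.sum_eq_zero (fun m _ => ?_)
                apply if_neg
                unfold t1M
                apply not_mem_biUnion
                rintro (_ | j)
                · exact match_image_zero_local (fun e' he' => (hHM m).1 e' he') hZholeC
                · exact match_image_zero_local ((hI j).1 m).1 (hZpsiC j)
              have hT3C : (∑ n : Fin s₁, ((t1S (HS n) (fun j => IS1 j n)).filter (fun b => (s(Sum.inl ((j₁, w₁), t₁), Sum.inl ((j₂, w₂), t₂)) : Sym2 (GV u g t h)) ∈ starEdges b)).card) = 0 := by
                refine Finset.sum_eq_zero (fun n _ => ?_)
                rw [Finset.card_eq_zero]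
                unfold t1S
                apply filter_biUnion_zero
                rintro (_ | j)
                · exact star_filter_zero_local (fun b hb => ((hHS n).1 b hb).2.2.1) hZholeC
                · exact star_filter_zero_local
                    (fun b hb => (((hI j).2.1 n).1 b hb).2.2.1) (hZpsiC j)
              have hmemb : ∀ (j : Fin u) (k : Fin (g / 3)) (b : {x // x ∈ C j k})
                  (w₁' w₂' : Fin u × Fin g) (t₁' t₂' : Fin t),
                  (∃ q₁ q₂ : Fin 4, eb j k b q₁ = w₁' ∧ eb j k b q₂ = w₂') →
                  s((Sum.inl (w₁', t₁') : GV u g t h), Sum.inl (w₂', t₂')) = (s(Sum.inl ((j₁, w₁), t₁), Sum.inl ((j₂, w₂), t₂)) : Sym2 (GV u g t h)) →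
                  s(((j₁, w₁) : Fin u × Fin g), (j₂, w₂)) ∈ blockEdges b.1 := by
                intro j k b w₁' w₂' t₁' t₂' hex heq
                obtain ⟨q₁', q₂', hq₁, hq₂⟩ := hex
                have hmm1 : w₁' ∈ b.1 := (hebM j k b _).2 ⟨q₁', hq₁⟩
                have hmm2 : w₂' ∈ b.1 := (hebM j k b _).2 ⟨q₂', hq₂⟩
                rcases Sym2.eq_iff.1 heq with ⟨h1, h2⟩ | ⟨h1, h2⟩
                · obtain ⟨ha1, -⟩ : w₁' = (j₁, w₁) ∧ t₁' = t₁ := by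
                    simpa [Prod.ext_iff] using h1
                  obtain ⟨ha2, -⟩ : w₂' = (j₂, w₂) ∧ t₂' = t₂ := by
                    simpa [Prod.ext_iff] using h2
                  exact mk_mem_blockEdges.2 ⟨ha1 ▸ hmm1, ha2 ▸ hmm2, hne'⟩
                · obtain ⟨ha1, -⟩ : w₁' = (j₂, w₂) ∧ t₁' = t₂ := by
                    simpa [Prod.ext_iff] using h1
                  obtain ⟨ha2, -⟩ : w₂' = (j₁, w₁) ∧ t₂' = t₁ := by
                    simpa [Prod.ext_iff] using h2
                  exact mk_mem_blockEdges.2 ⟨ha2 ▸ hmm2, ha1 ▸ hmm1, hne'⟩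
              have hN := hC2 s(((j₁, w₁) : Fin u × Fin g), (j₂, w₂)) hbase
              have hNle : ∀ (j : Fin u) (k : Fin (g / 3)), ((C j k).filter (fun b => s(((j₁, w₁) : Fin u × Fin g), (j₂, w₂)) ∈ blockEdges b)).card ≤ 1 := by
                intro j k
                calc ((C j k).filter (fun b => s(((j₁, w₁) : Fin u × Fin g), (j₂, w₂)) ∈ blockEdges b)).card
                    ≤ ∑ k' : Fin (g / 3), ((C j k').filter
                        (fun b => s(((j₁, w₁) : Fin u × Fin g), (j₂, w₂)) ∈ blockEdges b)).card :=
                      Finset.single_le_sum (f := fun k' => ((C j k').filter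
                        (fun b => s(((j₁, w₁) : Fin u × Fin g), (j₂, w₂)) ∈ blockEdges b)).card)
                        (fun _ _ => Nat.zero_le _) (Finset.mem_univ k)
                  _ ≤ ∑ j' : Fin u, ∑ k' : Fin (g / 3), ((C j' k').filter
                        (fun b => s(((j₁, w₁) : Fin u × Fin g), (j₂, w₂)) ∈ blockEdges b)).card :=
                      Finset.single_le_sum (f := fun j' => ∑ k' : Fin (g / 3), ((C j' k').filter
                        (fun b => s(((j₁, w₁) : Fin u × Fin g), (j₂, w₂)) ∈ blockEdges b)).card)
                        (fun _ _ => Nat.zero_le _) (Finset.mem_univ j)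
                  _ = 1 := hN
              have houtkey : ∀ (j : Fin u) (k : Fin (g / 3)),
                  (∑ m' : Fin (p j k).1, if (s(Sum.inl ((j₁, w₁), t₁), Sum.inl ((j₂, w₂), t₂)) : Sym2 (GV u g t h)) ∈ (outM (C j k) (eb j k) (GM j k m') : Finset (Sym2 (GV u g t h))) then 1 else 0)
                    + (∑ n' : Fin (p j k).2,
                        ((outS (C j k) (eb j k) (GS j k n') : Finset (GV u g t h × Finset (GV u g t h))).filter (fun b => (s(Sum.inl ((j₁, w₁), t₁), Sum.inl ((j₂, w₂), t₂)) : Sym2 (GV u g t h)) ∈ starEdges b)).card)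
                    = ((C j k).filter (fun b => s(((j₁, w₁) : Fin u × Fin g), (j₂, w₂)) ∈ blockEdges b)).card := by
                intro j k
                rcases Nat.le_one_iff_eq_zero_or_eq_one.1 (hNle j k) with h0 | h1
                · rw [h0]
                  have hempty : ∀ b : {x // x ∈ C j k}, s(((j₁, w₁) : Fin u × Fin g), (j₂, w₂)) ∉ blockEdges b.1 := by
                    intro b hmem2
                    have hmem3 : b.1 ∈ (C j k).filter
                        (fun bb => s(((j₁, w₁) : Fin u × Fin g), (j₂, w₂)) ∈ blockEdges bb) :=
                      Finset.mem_filter.2 ⟨b.2, hmem2⟩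
                    rw [Finset.card_eq_zero.1 h0] at hmem3
                    exact absurd hmem3 (Finset.notMem_empty _)
                  have hZ : ∀ (b : {x // x ∈ C j k}) (w₁' w₂' : Fin u × Fin g)
                      (t₁' t₂' : Fin t), w₁'.1 ≠ w₂'.1 →
                      (∃ q₁ q₂ : Fin 4, eb j k b q₁ = w₁' ∧ eb j k b q₂ = w₂') →
                      s((Sum.inl (w₁', t₁') : GV u g t h), Sum.inl (w₂', t₂')) ≠ (s(Sum.inl ((j₁, w₁), t₁), Sum.inl ((j₂, w₂), t₂)) : Sym2 (GV u g t h)) :=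
                    fun b w₁' w₂' t₁' t₂' _ hex heq => hempty b (hmemb j k b _ _ _ _ hex heq)
                  have hMz : (∑ m' : Fin (p j k).1, if (s(Sum.inl ((j₁, w₁), t₁), Sum.inl ((j₂, w₂), t₂)) : Sym2 (GV u g t h)) ∈ (outM (C j k) (eb j k) (GM j k m') : Finset (Sym2 (GV u g t h))) then 1 else 0) = 0 := by
                    refine Finset.sum_eq_zero (fun m' _ => ?_)
                    apply if_neg
                    unfold outM
                    apply not_mem_biUnion
                    intro b
                    exact match_image_zero_local (fun e' he' => ((hG j k).2.2.1 m').1 e' he')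
                      (blkEmb_ne (hebG j k b) (hZ b))
                  have hSz : (∑ n' : Fin (p j k).2,
                      ((outS (C j k) (eb j k) (GS j k n') : Finset (GV u g t h × Finset (GV u g t h))).filter (fun b => (s(Sum.inl ((j₁, w₁), t₁), Sum.inl ((j₂, w₂), t₂)) : Sym2 (GV u g t h)) ∈ starEdges b)).card) = 0 := by
                    refine Finset.sum_eq_zero (fun n' _ => ?_)
                    rw [Finset.card_eq_zero]
                    unfold outS
                    apply filter_biUnion_zero
                    intro b
                    exact star_filter_zero_local
                      (fun bb hbb => (((hG j k).2.2.2.1 n').1 bb hbb).2.2.1)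
                      (blkEmb_ne (hebG j k b) (hZ b))
                  rw [hMz, hSz]
                · rw [h1]
                  obtain ⟨b₀, hb₀⟩ := Finset.card_eq_one.1 h1
                  have hb₀mem : b₀ ∈ (C j k).filter (fun bb => s(((j₁, w₁) : Fin u × Fin g), (j₂, w₂)) ∈ blockEdges bb) := by
                    rw [hb₀]; exact Finset.mem_singleton_self b₀
                  have hb₀C : b₀ ∈ C j k := (Finset.mem_filter.1 hb₀mem).1
                  have hb₀E : s(((j₁, w₁) : Fin u × Fin g), (j₂, w₂)) ∈ blockEdges b₀ := (Finset.mem_filter.1 hb₀mem).2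
                  have huniqb : ∀ (b : {x // x ∈ C j k}), s(((j₁, w₁) : Fin u × Fin g), (j₂, w₂)) ∈ blockEdges b.1 →
                      b = (⟨b₀, hb₀C⟩ : {x // x ∈ C j k}) := by
                    intro b hmem2
                    have hmem3 : b.1 ∈ (C j k).filter
                        (fun bb => s(((j₁, w₁) : Fin u × Fin g), (j₂, w₂)) ∈ blockEdges bb) :=
                      Finset.mem_filter.2 ⟨b.2, hmem2⟩
                    rw [hb₀] at hmem3
                    exact Subtype.ext (Finset.mem_singleton.1 hmem3)
                  obtain ⟨hm1, hm2, -⟩ := mk_mem_blockEdges.1 hb₀E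
                  obtain ⟨q₁, hq₁⟩ := (hebM j k ⟨b₀, hb₀C⟩ _).1 hm1
                  obtain ⟨q₂, hq₂⟩ := (hebM j k ⟨b₀, hb₀C⟩ _).1 hm2
                  have hq12 : q₁ ≠ q₂ := fun hqq => hne' (by rw [← hq₁, ← hq₂, hqq])
                  have heemem : s(((q₁, t₁) : Fin 4 × Fin t), (q₂, t₂)) ∈ multipartiteEdges 4 t := mk_mem_multipartiteEdges.2 hq12
                  have hemap : (s(Sum.inl ((j₁, w₁), t₁), Sum.inl ((j₂, w₂), t₂)) : Sym2 (GV u g t h)) = Sym2.map (blkEmb t h (eb j k ⟨b₀, hb₀C⟩)) s(((q₁, t₁) : Fin 4 × Fin t), (q₂, t₂)) := by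
                    rw [Sym2.map_pair_eq]
                    show _ = s(Sum.inl (eb j k ⟨b₀, hb₀C⟩ q₁, t₁),
                      Sum.inl (eb j k ⟨b₀, hb₀C⟩ q₂, t₂))
                    rw [hq₁, hq₂]
                  have hbz : ∀ (b : {x // x ∈ C j k}), b ≠ ⟨b₀, hb₀C⟩ →
                      ∀ (w₁' w₂' : Fin u × Fin g) (t₁' t₂' : Fin t), w₁'.1 ≠ w₂'.1 →
                      (∃ q₁' q₂' : Fin 4, eb j k b q₁' = w₁' ∧ eb j k b q₂' = w₂') →
                      s((Sum.inl (w₁', t₁') : GV u g t h), Sum.inl (w₂', t₂')) ≠ (s(Sum.inl ((j₁, w₁), t₁), Sum.inl ((j₂, w₂), t₂)) : Sym2 (GV u g t h)) :=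
                    fun b hb _ _ _ _ _ hex heq => hb (huniqb b (hmemb j k b _ _ _ _ hex heq))
                  have hMt : ∀ m' : Fin (p j k).1,
                      ((s(Sum.inl ((j₁, w₁), t₁), Sum.inl ((j₂, w₂), t₂)) : Sym2 (GV u g t h)) ∈ (outM (C j k) (eb j k) (GM j k m') : Finset (Sym2 (GV u g t h)))) ↔ s(((q₁, t₁) : Fin 4 × Fin t), (q₂, t₂)) ∈ GM j k m' := by
                    intro m'
                    unfold outM
                    refine Iff.trans (mem_biUnion_single
                      (⟨b₀, hb₀C⟩ : {x // x ∈ C j k}) ?_) ?_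
                    · intro b hb
                      exact match_image_zero_local
                        (fun e' he' => ((hG j k).2.2.1 m').1 e' he')
                        (blkEmb_ne (hebG j k b) (hbz b hb))
                    · rw [hemap]
                      exact map_mem_image_iff (blkEmb_injective t h (hebI j k ⟨b₀, hb₀C⟩))
                  have hSt : ∀ n' : Fin (p j k).2,
                      ((outS (C j k) (eb j k) (GS j k n') : Finset (GV u g t h × Finset (GV u g t h))).filter (fun b => (s(Sum.inl ((j₁, w₁), t₁), Sum.inl ((j₂, w₂), t₂)) : Sym2 (GV u g t h)) ∈ starEdges b)).card
                        = ((GS j k n').filter (fun b => s(((q₁, t₁) : Fin 4 × Fin t), (q₂, t₂)) ∈ starEdges b)).card := by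
                    intro n'
                    unfold outS
                    rw [filter_biUnion_single (⟨b₀, hb₀C⟩ : {x // x ∈ C j k})
                      (fun b hb => star_filter_zero_local
                        (fun bb hbb => (((hG j k).2.2.2.1 n').1 bb hbb).2.2.1)
                        (blkEmb_ne (hebG j k b) (hbz b hb)))]
                    rw [hemap]
                    exact card_filter_image_star (blkEmb_injective t h (hebI j k ⟨b₀, hb₀C⟩))
                  have hloc := (hG j k).2.2.2.2 s(((q₁, t₁) : Fin 4 × Fin t), (q₂, t₂)) heemem
                  simp only [Finset.univ_eq_empty, Finset.sum_empty] at hloc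
                  rw [Finset.sum_congr rfl (fun m' _ => if_congr (hMt m') rfl rfl),
                    Finset.sum_congr rfl (fun n' _ => hSt n')]
                  omega
              have hT2C : (∑ j : Fin u, ∑ m : Fin (f j).1, if (s(Sum.inl ((j₁, w₁), t₁), Sum.inl ((j₂, w₂), t₂)) : Sym2 (GV u g t h)) ∈ ((IM2 j m).image (Sym2.map (psi g t h j))) ∪ outM (C j ((σM j).symm m).1) (eb j ((σM j).symm m).1) (GM j ((σM j).symm m).1 ((σM j).symm m).2) then 1 else 0) = ∑ j : Fin u, ∑ k : Fin (g / 3),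
                  ∑ m' : Fin (p j k).1, if (s(Sum.inl ((j₁, w₁), t₁), Sum.inl ((j₂, w₂), t₂)) : Sym2 (GV u g t h)) ∈ (outM (C j k) (eb j k) (GM j k m') : Finset (Sym2 (GV u g t h))) then 1 else 0 := by
                refine Finset.sum_congr rfl (fun j _ => ?_)
                rw [Finset.sum_congr rfl (fun m (_ : m ∈ Finset.univ) => if_congr
                  (Iff.trans Finset.mem_union (or_iff_right (hZIM2 j m))) rfl rfl)]
                rw [Fintype.sum_equiv ((σM j).symm) _
                  (fun km => if (s(Sum.inl ((j₁, w₁), t₁), Sum.inl ((j₂, w₂), t₂)) : Sym2 (GV u g t h)) ∈ (outM (C j km.1) (eb j km.1) (GM j km.1 km.2) :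
                    Finset (Sym2 (GV u g t h))) then 1 else 0) (fun m => rfl)]
                rw [← Finset.univ_sigma_univ, Finset.sum_sigma]
              have hT4C : (∑ j : Fin u, ∑ n : Fin (f j).2, ((((IS2 j n).image (mapStar (psi g t h j))) ∪ outS (C j ((σS j).symm n).1) (eb j ((σS j).symm n).1) (GS j ((σS j).symm n).1 ((σS j).symm n).2)).filter (fun b => (s(Sum.inl ((j₁, w₁), t₁), Sum.inl ((j₂, w₂), t₂)) : Sym2 (GV u g t h)) ∈ starEdges b)).card) = ∑ j : Fin u, ∑ k : Fin (g / 3),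
                  ∑ n' : Fin (p j k).2, ((outS (C j k) (eb j k) (GS j k n') : Finset (GV u g t h × Finset (GV u g t h))).filter (fun b => (s(Sum.inl ((j₁, w₁), t₁), Sum.inl ((j₂, w₂), t₂)) : Sym2 (GV u g t h)) ∈ starEdges b)).card := by
                refine Finset.sum_congr rfl (fun j _ => ?_)
                rw [Finset.sum_congr rfl (fun n (_ : n ∈ Finset.univ) => by
                  rw [Finset.filter_union, hZIS2 j n, Finset.empty_union])]
                rw [Fintype.sum_equiv ((σS j).symm) _
                  (fun kn => ((outS (C j kn.1) (eb j kn.1) (GS j kn.1 kn.2) :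
                    Finset (GV u g t h × Finset (GV u g t h))).filter
                      (fun b => (s(Sum.inl ((j₁, w₁), t₁), Sum.inl ((j₂, w₂), t₂)) : Sym2 (GV u g t h)) ∈ starEdges b)).card) (fun n => rfl)]
                rw [← Finset.univ_sigma_univ, Finset.sum_sigma]
              have hsplit : (∑ j : Fin u, ∑ k : Fin (g / 3),
                  ((∑ m' : Fin (p j k).1, if (s(Sum.inl ((j₁, w₁), t₁), Sum.inl ((j₂, w₂), t₂)) : Sym2 (GV u g t h)) ∈ (outM (C j k) (eb j k) (GM j k m') : Finset (Sym2 (GV u g t h))) then 1 else 0)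
                    + (∑ n' : Fin (p j k).2,
                        ((outS (C j k) (eb j k) (GS j k n') : Finset (GV u g t h × Finset (GV u g t h))).filter (fun b => (s(Sum.inl ((j₁, w₁), t₁), Sum.inl ((j₂, w₂), t₂)) : Sym2 (GV u g t h)) ∈ starEdges b)).card))) = 1 := by
                rw [Finset.sum_congr rfl (fun j (_ : j ∈ Finset.univ) =>
                  Finset.sum_congr rfl (fun k (_ : k ∈ Finset.univ) => houtkey j k))]
                exact hN
              have hsplit2 : (∑ j : Fin u, ∑ k : Fin (g / 3),
                  ((∑ m' : Fin (p j k).1, if (s(Sum.inl ((j₁, w₁), t₁), Sum.inl ((j₂, w₂), t₂)) : Sym2 (GV u g t h)) ∈ (outM (C j k) (eb j k) (GM j k m') : Finset (Sym2 (GV u g t h))) then 1 else 0)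
                    + (∑ n' : Fin (p j k).2,
                        ((outS (C j k) (eb j k) (GS j k n') : Finset (GV u g t h × Finset (GV u g t h))).filter (fun b => (s(Sum.inl ((j₁, w₁), t₁), Sum.inl ((j₂, w₂), t₂)) : Sym2 (GV u g t h)) ∈ starEdges b)).card)))
                  = (∑ j : Fin u, ∑ k : Fin (g / 3),
                      ∑ m' : Fin (p j k).1, if (s(Sum.inl ((j₁, w₁), t₁), Sum.inl ((j₂, w₂), t₂)) : Sym2 (GV u g t h)) ∈ (outM (C j k) (eb j k) (GM j k m') : Finset (Sym2 (GV u g t h))) then 1 else 0)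
                    + (∑ j : Fin u, ∑ k : Fin (g / 3), ∑ n' : Fin (p j k).2,
                        ((outS (C j k) (eb j k) (GS j k n') : Finset (GV u g t h × Finset (GV u g t h))).filter (fun b => (s(Sum.inl ((j₁, w₁), t₁), Sum.inl ((j₂, w₂), t₂)) : Sym2 (GV u g t h)) ∈ starEdges b)).card) := by
                rw [Finset.sum_congr rfl (fun j (_ : j ∈ Finset.univ) =>
                  Finset.sum_add_distrib), Finset.sum_add_distrib]
              rw [hT1C, hT2C, hT3C, hT4C]
              omega
          · -- CASE B1
            have hxq : (Sum.inl ((j₁, w₁), t₁) : GV u g t h)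
                = psi g t h j₁ (Sum.inl (finProdFinEquiv (w₁, t₁))) := by simp
            have hyq : (Sum.inr c : GV u g t h) = psi g t h j₁ (Sum.inr c) := rfl
            rw [hxq, hyq]
            exact caseB j₁ _ _ (finProdFinEquiv (w₁, t₁)) rfl
              (mk_mem_holeyEdges.2 ⟨by simp, by simp⟩)
        · rcases y with wy | c
          · simp at hside
          · -- CASE A
            have hac : (a : Fin h) ≠ c := fun hq => hne (by rw [hq])
            have hZpsiA : ∀ j : Fin u, ∀ p q, s(p, q) ∈ holeyEdges (g * t) h →
                s(psi g t h j p, psi g t h j q) ≠ (s(Sum.inr a, Sum.inr c) : Sym2 (GV u g t h)) :=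
              fun j => psi_ne_of_notG (fun w t' => by simp) (fun w t' => by simp)
            have hZoutA : ∀ (j : Fin u) (k : Fin (g / 3)) (b : {x // x ∈ C j k}),
                ∀ (w₁ w₂ : Fin u × Fin g) (t₁' t₂' : Fin t), w₁.1 ≠ w₂.1 →
                (∃ q₁ q₂ : Fin 4, eb j k b q₁ = w₁ ∧ eb j k b q₂ = w₂) →
                s((Sum.inl (w₁, t₁') : GV u g t h), Sum.inl (w₂, t₂')) ≠ (s(Sum.inr a, Sum.inr c) : Sym2 (GV u g t h)) := by
              intro j k b w₁ w₂ t₁' t₂' _ _ heq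
              rcases Sym2.eq_iff.1 heq with ⟨h1, -⟩ | ⟨h1, -⟩ <;> simp at h1
            have hT1A : (∑ m : Fin r₁, if (s(Sum.inr a, Sum.inr c) : Sym2 (GV u g t h)) ∈ t1M (HM m) (fun j => IM1 j m) then 1 else 0)
                = ∑ m : Fin r₁, if s(a, c) ∈ HM m then 1 else 0 := by
              refine Finset.sum_congr rfl (fun m _ => if_congr ?_ rfl rfl)
              unfold t1M
              refine Iff.trans (mem_biUnion_single none ?_) ?_
              · rintro (_ | j) hc
                · exact absurd rfl hc
                · exact match_image_zero_local ((hI j).1 m).1 (hZpsiA j)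
              · rw [← Sym2.map_pair_eq]
                exact map_mem_image_iff Sum.inr_injective
            have hT2A : (∑ j : Fin u, ∑ m : Fin (f j).1, if (s(Sum.inr a, Sum.inr c) : Sym2 (GV u g t h)) ∈ ((IM2 j m).image (Sym2.map (psi g t h j))) ∪ outM (C j ((σM j).symm m).1) (eb j ((σM j).symm m).1) (GM j ((σM j).symm m).1 ((σM j).symm m).2) then 1 else 0) = 0 := by
              refine Finset.sum_eq_zero (fun j _ => Finset.sum_eq_zero (fun m _ => ?_))
              apply if_neg
              intro hm
              rcases Finset.mem_union.1 hm with hm | hm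
              · exact match_image_zero_local ((hI j).2.2.1 m).1 (hZpsiA j) hm
              · revert hm
                unfold outM
                apply not_mem_biUnion
                intro b
                exact match_image_zero_local
                  (fun e' he' => ((hG j ((σM j).symm m).1).2.2.1 ((σM j).symm m).2).1 e' he')
                  (blkEmb_ne (hebG j ((σM j).symm m).1 b) (hZoutA j ((σM j).symm m).1 b))
            have hT3A : (∑ n : Fin s₁, ((t1S (HS n) (fun j => IS1 j n)).filter (fun b => (s(Sum.inr a, Sum.inr c) : Sym2 (GV u g t h)) ∈ starEdges b)).card)
                = ∑ n : Fin s₁, ((HS n).filter (fun b => s(a, c) ∈ starEdges b)).card := by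
              refine Finset.sum_congr rfl (fun n _ => ?_)
              unfold t1S
              rw [filter_biUnion_single none ?_]
              · rw [← Sym2.map_pair_eq]
                exact card_filter_image_star Sum.inr_injective
              · rintro (_ | j) hc
                · exact absurd rfl hc
                · exact star_filter_zero_local
                    (fun b hb => (((hI j).2.1 n).1 b hb).2.2.1) (hZpsiA j)
            have hT4A : (∑ j : Fin u, ∑ n : Fin (f j).2, ((((IS2 j n).image (mapStar (psi g t h j))) ∪ outS (C j ((σS j).symm n).1) (eb j ((σS j).symm n).1) (GS j ((σS j).symm n).1 ((σS j).symm n).2)).filter (fun b => (s(Sum.inr a, Sum.inr c) : Sym2 (GV u g t h)) ∈ starEdges b)).card) = 0 := by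
              refine Finset.sum_eq_zero (fun j _ => Finset.sum_eq_zero (fun n _ => ?_))
              rw [Finset.filter_union,
                star_filter_zero_local (fun b hb => (((hI j).2.2.2.1 n).1 b hb).2.2.1) (hZpsiA j),
                Finset.empty_union, Finset.card_eq_zero]
              unfold outS
              apply filter_biUnion_zero
              intro b
              exact star_filter_zero_local
                (fun bb hbb => (((hG j ((σS j).symm n).1).2.2.2.1 ((σS j).symm n).2).1 bb hbb).2.2.1)
                (blkEmb_ne (hebG j ((σS j).symm n).1 b) (hZoutA j ((σS j).symm n).1 b))
            have hloc := hHcnt s(a, c) (mk_mem_completeEdges.2 hac)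
            simp only [Finset.univ_eq_empty, Finset.sum_empty] at hloc
            rw [hT1A, hT2A, hT3A, hT4A]
            omega
      revert he
      induction e using Sym2.ind with
      | _ x y =>
        intro he
        rw [mk_mem_completeEdges] at he
        rw [Fintype.sum_sum_type, Fintype.sum_sum_type]
        simp only [Sum.elim_inl, Sum.elim_inr]
        rw [← Finset.univ_sigma_univ, Finset.sum_sigma, ← Finset.univ_sigma_univ,
          Finset.sum_sigma]
        rcases x with wx | cx
        · exact key _ _ he (Or.inl rfl)
        · rcases y with wy | cy
          · rw [Sym2.eq_swap]
            exact key _ _ (Ne.symm he) (Or.inl rfl)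
          · exact key _ _ he (Or.inr rfl)
  exact hasUniformDecomp_equiv θ goal'
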